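/- arXiv:1509.03316 — 5 statements merged into one kernel-verified Lean document; each statement's English description precedes it below -/
import Mathlib

section
/- Assume g_i ≥ 2 for every 1 ≤ i ≤ G. Viewing Mat_{n_1⋯n_G}(k[ζ]) inside Mat_{n_1⋯n_G}(k(ζ)), where k(ζ) is the field of fractions of k[ζ], the k(ζ)-linear span of the algebra of multipartite generic matrices GM_{n_1,…,n_G}(x) is all of Mat_{n_1⋯n_G}(k(ζ)); in other words, Mat_{n_1⋯n_G}(k(ζ)) is a central extension of GM_{n_1,…,n_G}(x). -/
/-- `tau n i A = I ⊗ ⋯ ⊗ A ⊗ ⋯ ⊗ I`, the Kronecker product with `A` in the `i`-th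
slot and identity matrices elsewhere, realized on the index set `∀ j, Fin (n j)`. -/
def tau {R : Type*} [CommRing R] {ι : Type*} [Fintype ι] [DecidableEq ι]
    (n : ι → ℕ) (i : ι) (A : Matrix (Fin (n i)) (Fin (n i)) R) :
    Matrix (∀ j, Fin (n j)) (∀ j, Fin (n j)) R :=
  Matrix.of fun α β =>
    A (α i) (β i) * ∏ j ∈ Finset.univ.erase i, (if α j = β j then (1 : R) else 0)

/-- The indexing set for the commuting indeterminates `ζ^(i)_{jαβ}`. -/
abbrev ZetaIdx {G : ℕ} (g n : Fin G → ℕ) : Type :=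
  Σ i : Fin G, Fin (g i) × Fin (n i) × Fin (n i)

/-- The generic matrix `x^(i)_j`, with `(α,β)` entry the indeterminate `ζ^(i)_{jαβ}`. -/
noncomputable def genMat (k : Type*) [Field k] {G : ℕ} (g n : Fin G → ℕ) (i : Fin G) (j : Fin (g i)) :
    Matrix (Fin (n i)) (Fin (n i)) (MvPolynomial (ZetaIdx g n) k) :=
  Matrix.of fun α β => MvPolynomial.X ⟨i, (j, α, β)⟩

/-- The algebra of multipartite generic matrices `GM_{n_1,…,n_G}(x)`: the unital
`k`-subalgebra of `Mat_{n_1⋯n_G}(k[ζ])` generated by the multipartite generic matrices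
`τ_i(x^(i)_j)`. -/
noncomputable def GM (k : Type*) [Field k] {G : ℕ} (g n : Fin G → ℕ) :
    Subalgebra k (Matrix (∀ j, Fin (n j)) (∀ j, Fin (n j)) (MvPolynomial (ZetaIdx g n) k)) :=
  Algebra.adjoin k {M | ∃ (i : Fin G) (j : Fin (g i)), M = tau n i (genMat k g n i j)}

/-!
Specialize the indeterminates so that, in every tensor slot `i`, one generic matrix becomes
`diagonal (0, 1, …, n_i - 1)` and the others the all-ones matrix `J`. In characteristic zero
the diagonal entries are distinct, so Lagrange interpolation yields the diagonal matrix units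
`E_aa`, and `E_ab = E_aa J E_bb`; thus each slot specializes onto all of `Mat_{n_i}(k)`.
Since `τ_1(A_1) ⋯ τ_G(A_G) = A_1 ⊗ ⋯ ⊗ A_G`, every matrix unit of `Mat_{n_1⋯n_G}(k)` is the
specialization of some element of `GM`. Collect the entries of these `N²` elements
(`N = n_1⋯n_G`) into an `N² × N²` matrix: it specializes to the identity, so its determinant
is a nonzero polynomial, the elements are linearly independent over `k(ζ)`, and by dimension
count they span.
-/

namespace Matrix

section PiKronecker

variable {ι R : Type*} [Fintype ι] [CommSemiring R]

def piKronecker {m p : ι → Type*} (M : ∀ i, Matrix (m i) (p i) R) :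
    Matrix (∀ i, m i) (∀ i, p i) R :=
  of fun α β => ∏ i, M i (α i) (β i)

@[simp]
lemma piKronecker_apply {m p : ι → Type*} (M : ∀ i, Matrix (m i) (p i) R) (α : ∀ i, m i)
    (β : ∀ i, p i) : piKronecker M α β = ∏ i, M i (α i) (β i) :=
  rfl

lemma piKronecker_mul [DecidableEq ι] {l m p : ι → Type*} [∀ i, Fintype (m i)]
    (M : ∀ i, Matrix (l i) (m i) R) (N : ∀ i, Matrix (m i) (p i) R) :
    piKronecker M * piKronecker N = piKronecker fun i => M i * N i := by
  ext α β
  simp only [piKronecker_apply, mul_apply, Fintype.prod_sum, Finset.prod_mul_distrib]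

lemma piKronecker_single {m p : ι → Type*} [∀ i, DecidableEq (m i)] [∀ i, DecidableEq (p i)]
    (a : ∀ i, m i) (b : ∀ i, p i) :
    piKronecker (fun i => single (a i) (b i) (1 : R)) = single a b 1 := by
  ext α β
  simp only [piKronecker_apply, single_apply, Finset.prod_boole, Finset.mem_univ, forall_const,
    forall_and, funext_iff]

lemma piKronecker_one {m : ι → Type*} [∀ i, DecidableEq (m i)] :
    piKronecker (fun i => (1 : Matrix (m i) (m i) R)) = 1 := by
  ext α β
  simp only [piKronecker_apply, one_apply, Finset.prod_boole, Finset.mem_univ, forall_const,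
    funext_iff]

lemma piKronecker_map {S : Type*} [CommSemiring S] {m p : ι → Type*}
    (M : ∀ i, Matrix (m i) (p i) R) (f : R →+* S) :
    (piKronecker M).map f = piKronecker fun i => (M i).map f := by
  ext α β
  simp

def piKroneckerHom [DecidableEq ι] (m : ι → Type*) [∀ i, Fintype (m i)]
    [∀ i, DecidableEq (m i)] :
    (∀ i, Matrix (m i) (m i) R) →* Matrix (∀ i, m i) (∀ i, m i) R where
  toFun := piKronecker
  map_one' := piKronecker_one
  map_mul' M N := (piKronecker_mul M N).symm

end PiKronecker

section AdjoinDiagonal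

variable {k m : Type*} [Field k] [Fintype m] [DecidableEq m]

lemma single_self_mem_adjoin_diagonal {d : m → k} (hd : Function.Injective d) (a : m) :
    single a a 1 ∈ Algebra.adjoin k {diagonal d} := by
  set L := Lagrange.basis Finset.univ d a
  have hL : (fun b => L.eval (d b)) = Pi.single a 1 := by
    ext b
    rcases eq_or_ne b a with rfl | hba
    · simpa using Lagrange.eval_basis_self hd.injOn (Finset.mem_univ b)
    · simpa [hba] using Lagrange.eval_basis_of_ne hba.symm (Finset.mem_univ b)
  have : Polynomial.aeval (diagonal d) L = single a a 1 := by
    rw [← diagonal_single, ← hL, ← diagonalAlgHom_apply (R := k),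
      Polynomial.aeval_algHom_apply, Polynomial.aeval_pi_apply]
    simp
  exact this ▸ Polynomial.aeval_mem_adjoin_singleton k (diagonal d)

lemma adjoin_diagonal_allOnes_eq_top {d : m → k} (hd : Function.Injective d) :
    Algebra.adjoin k {diagonal d, of fun _ _ => 1} = ⊤ := by
  set A := Algebra.adjoin k {diagonal d, of fun _ _ => (1 : k)}
  have hsingle : ∀ a b, single a b 1 ∈ A := fun a b => by
    have hdiag : ∀ c, single c c 1 ∈ A := fun c =>
      Algebra.adjoin_mono (by simp) (single_self_mem_adjoin_diagonal hd c)
    have hJ : of (fun _ _ => (1 : k)) ∈ A := Algebra.subset_adjoin (by simp)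
    simpa using mul_mem (mul_mem (hdiag a) hJ) (hdiag b)
  refine eq_top_iff.2 fun M _ => ?_
  rw [matrix_eq_sum_single M]
  refine Subalgebra.sum_mem _ fun a _ => Subalgebra.sum_mem _ fun b _ => ?_
  simpa [smul_single] using Subalgebra.smul_mem A (hsingle a b) (M a b)

end AdjoinDiagonal

theorem span_map_eq_top_of_map_eq_single {R k K m n : Type*} [CommRing R] [CommRing k]
    [Nontrivial k] [Field K] [Fintype m] [Fintype n] [DecidableEq m] [DecidableEq n]
    (φ : R →+* k) (ψ : R →+* K) (hψ : Function.Injective ψ) (S : Set (Matrix m n R))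
    (hS : ∀ a b, ∃ w ∈ S, w.map φ = single a b 1) :
    Submodule.span K ((fun M => M.map ψ) '' S) = ⊤ := by
  choose w hwS hw using hS
  let Φ : Matrix (m × n) (m × n) R := of fun p q => w p.1 p.2 q.1 q.2
  have hΦ : Φ.map φ = 1 := by
    ext p q
    simpa [Φ, single_apply, one_apply, Prod.ext_iff] using congr_fun₂ (hw p.1 p.2) q.1 q.2
  have hdet : ψ Φ.det ≠ 0 := by
    refine (map_ne_zero_iff ψ hψ).2 fun h => ?_
    simpa [hΦ, h] using φ.map_det Φ
  have hli : LinearIndependent K fun p : m × n => (w p.1 p.2).map ψ := by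
    have hrows := linearIndependent_rows_iff_isUnit.2
      ((isUnit_iff_isUnit_det (Φ.map ψ)).2 (RingHom.map_det ψ Φ ▸ hdet.isUnit))
    exact hrows.map' (LinearEquiv.curry K K m n).toLinearMap (LinearEquiv.ker _)
  have hcard : Fintype.card (m × n) = Module.finrank K (Matrix m n K) := by
    simp [Module.finrank_matrix, Fintype.card_prod]
  rw [eq_top_iff, ← hli.span_eq_top_of_card_eq_finrank' hcard]
  exact Submodule.span_mono (Set.range_subset_iff.2 fun p => ⟨_, hwS p.1 p.2, rfl⟩)

end Matrix

open Matrix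

section Tau

variable {R ι : Type*} [CommRing R] [Fintype ι] [DecidableEq ι] (n : ι → ℕ)

lemma tau_eq_piKroneckerHom (i : ι) (A : Matrix (Fin (n i)) (Fin (n i)) R) :
    tau n i A = piKroneckerHom (fun j => Fin (n j)) (Pi.mulSingle i A) := by
  ext α β
  change _ = piKronecker _ α β
  rw [tau, of_apply, piKronecker_apply, ← Finset.mul_prod_erase _ _ (Finset.mem_univ i),
    Pi.mulSingle_eq_same]
  congr 1
  refine Finset.prod_congr rfl fun j hj => ?_
  rw [Pi.mulSingle_eq_of_ne (Finset.ne_of_mem_erase hj), one_apply]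

def tauAlgHom (k : Type*) [CommSemiring k] [Algebra k R] (i : ι) :
    Matrix (Fin (n i)) (Fin (n i)) R →ₐ[k] Matrix (∀ j, Fin (n j)) (∀ j, Fin (n j)) R :=
  AlgHom.ofLinearMap
    { toFun := tau n i
      map_add' A B := by ext; simp [tau, add_mul]
      map_smul' c A := by ext; simp [tau] }
    (by simp [tau_eq_piKroneckerHom])
    (fun A B => by simp [tau_eq_piKroneckerHom, Pi.mulSingle_mul])

lemma piKronecker_mem_of_forall_tau_mem
    (S : Submonoid (Matrix (∀ j, Fin (n j)) (∀ j, Fin (n j)) R))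
    (M : ∀ i, Matrix (Fin (n i)) (Fin (n i)) R) (hM : ∀ i, tau n i (M i) ∈ S) :
    piKronecker M ∈ S :=
  Submonoid.pi_mem_of_mulSingle_mem (H := S.comap (piKroneckerHom _)) M fun i =>
    Submonoid.mem_comap.2 (tau_eq_piKroneckerHom n i (M i) ▸ hM i)

end Tau

section GenericMatrices

variable (k : Type*) [Field k] {G : ℕ} (g n : Fin G → ℕ)

def specializationPoint : ZetaIdx g n → k :=
  fun ⟨i, j, a, b⟩ => if (j : ℕ) = 0 then diagonal (fun c : Fin (n i) => ((c : ℕ) : k)) a b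
    else 1

variable {k g n}

lemma tau_mem_GM {i : Fin G} {u : Matrix (Fin (n i)) (Fin (n i)) (MvPolynomial (ZetaIdx g n) k)}
    (hu : u ∈ Algebra.adjoin k (Set.range (genMat k g n i))) : tau n i u ∈ GM k g n := by
  have : (Algebra.adjoin k (Set.range (genMat k g n i))).map (tauAlgHom n k i) ≤ GM k g n := by
    rw [AlgHom.map_adjoin]
    exact Algebra.adjoin_mono (by rintro _ ⟨_, ⟨j, rfl⟩, rfl⟩; exact ⟨i, j, rfl⟩)
  exact this ⟨u, hu, rfl⟩

lemma map_adjoin_genMat_eq_top [CharZero k] {i : Fin G} (hg : 2 ≤ g i) :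
    (Algebra.adjoin k (Set.range (genMat k g n i))).map
      (MvPolynomial.aeval (specializationPoint k g n)).mapMatrix = ⊤ := by
  rw [AlgHom.map_adjoin, eq_top_iff,
    ← adjoin_diagonal_allOnes_eq_top (d := fun a : Fin (n i) => ((a : ℕ) : k))
      fun a b h => Fin.ext (Nat.cast_injective h)]
  refine Algebra.adjoin_mono (Set.insert_subset_iff.2 ⟨?_, Set.singleton_subset_iff.2 ?_⟩)
  · refine ⟨_, ⟨⟨0, by omega⟩, rfl⟩, ?_⟩
    ext a b
    simp [genMat, specializationPoint]
  · refine ⟨_, ⟨⟨1, by omega⟩, rfl⟩, ?_⟩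
    ext a b
    simp [genMat, specializationPoint]

lemma exists_mem_GM_map_eq_single [CharZero k] (hg : ∀ i, 2 ≤ g i)
    (α β : ∀ i, Fin (n i)) :
    ∃ w ∈ GM k g n, w.map (MvPolynomial.aeval (specializationPoint k g n)) = single α β 1 := by
  have hu : ∀ i, ∃ u ∈ Algebra.adjoin k (Set.range (genMat k g n i)),
      u.map (MvPolynomial.aeval (specializationPoint k g n)) = single (α i) (β i) 1 := fun i =>
    Subalgebra.mem_map.1 <| (map_adjoin_genMat_eq_top (hg i)).ge Algebra.mem_top
  choose u hu_mem hu_map using hu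
  exact ⟨piKronecker u,
    piKronecker_mem_of_forall_tau_mem n (GM k g n).toSubmonoid u fun i => tau_mem_GM (hu_mem i),
    (piKronecker_map u _).trans ((congrArg piKronecker (funext hu_map)).trans
      (piKronecker_single α β))⟩

end GenericMatrices

/-- from the proof of Lemma 2.2. Assume `g_i ≥ 2` for all `i`. Viewing
`Mat_{n_1⋯n_G}(k[ζ])` inside `Mat_{n_1⋯n_G}(k(ζ))`, the `k(ζ)`-linear span of the algebra
of multipartite generic matrices is all of `Mat_{n_1⋯n_G}(k(ζ))`; i.e. `Mat_{n_1⋯n_G}(k(ζ))`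
is a central extension of `GM_{n_1,…,n_G}(x)`. -/
theorem GM_spans_matrix_algebra {k : Type*} [Field k] [CharZero k] {G : ℕ}
    (g n : Fin G → ℕ) (hg : ∀ i, 2 ≤ g i) :
    Submodule.span (FractionRing (MvPolynomial (ZetaIdx g n) k))
      ((fun M : Matrix (∀ j, Fin (n j)) (∀ j, Fin (n j)) (MvPolynomial (ZetaIdx g n) k) =>
          M.map (algebraMap (MvPolynomial (ZetaIdx g n) k)
            (FractionRing (MvPolynomial (ZetaIdx g n) k)))) ''
        (GM k g n : Set (Matrix (∀ j, Fin (n j)) (∀ j, Fin (n j))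
          (MvPolynomial (ZetaIdx g n) k)))) = ⊤ :=
  span_map_eq_top_of_map_eq_single (MvPolynomial.aeval (specializationPoint k g n)).toRingHom
    _ (IsFractionRing.injective _ _) _ (exists_mem_GM_map_eq_single hg)
end

section
/- The algebra of multipartite generic matrices GM_{n_1,…,n_G}(x) is a domain: for all p, q ∈ GM_{n_1,…,n_G}(x), if p·q = 0 then p = 0 or q = 0. (This expresses that the ring of central quotients of GM_{n_1,…,n_G}(x) is a skew field.) -/
/-!
Choose a field `K ⊇ k` containing primitive `n_i`-th roots of unity `ζ_i`, and specialize each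
generic matrix `x^(i)_j` to `∑_{a,b} y^(i)_{jab} s_i^a t_i^b C_i^a S_i^b`, where `C_i` and `S_i` are
the `n_i × n_i` clock and shift matrices and `y, s, t` are new commuting variables. Since the
`C_i^a S_i^b` form a basis of `Mat_{n_i}(K)`, setting `s = t = 1` turns this specialization into an
invertible linear change of variables, so it is injective. Its image lies in the `K[y]`-span of the
matrices `s^c t^d ⊗_i C_i^(c_i) S_i^(d_i)`, which multiply like the monomials of `ℕ^(2G)` up to the
nonzero scalars produced by `S C = ζ C S`. Such a twisted monoid algebra over a domain has no zero
divisors, by the unique-sums argument for monoid algebras.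
-/

namespace MultipartiteGenericMatrix

open MvPolynomial Matrix Finset Fin.NatCast

theorem pow_mul_val_add_natCast {R : Type*} [Monoid R] {m : ℕ} [NeZero m] {z : R}
    (hz : z ^ m = 1) (c : ℕ) (a : Fin m) (b : ℕ) :
    z ^ (c * ((a + (b : Fin m) : Fin m) : ℕ)) = z ^ (c * a) * z ^ (c * b) := by
  have hzc : (z ^ c) ^ m = 1 := by rw [← pow_mul, mul_comm, pow_mul, hz, one_pow]
  rw [pow_mul, pow_mul, pow_mul, ← pow_add, Fin.val_add, Fin.val_natCast, Nat.add_mod_mod,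
    ← pow_eq_pow_mod _ hzc]

section Weyl

variable {ι : Type*} [Fintype ι] (n : ι → ℕ) [∀ i, NeZero (n i)]
  {R : Type*} [CommRing R] (ζ : ι → R)

/-- The Kronecker product over `i` of `C_i ^ d (i, false) * S_i ^ d (i, true)`, where
`C_i = diag (ζ i ^ α)` is the clock matrix and `S_i` the shift matrix, `S_i α β = 1` iff
`β = α + 1` in `Fin (n i)`. -/
def weylMatrix (d : (ι × Bool) →₀ ℕ) : Matrix (∀ i, Fin (n i)) (∀ i, Fin (n i)) R :=
  of fun α β =>
    if ∀ i, β i = α i + (d (i, true) : Fin (n i)) then ∏ i, ζ i ^ (d (i, false) * α i) else 0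

def weylCocycle (d e : (ι × Bool) →₀ ℕ) : R :=
  ∏ i, ζ i ^ (e (i, false) * d (i, true))

theorem weylMatrix_zero [DecidableEq ι] : weylMatrix n ζ 0 = 1 := by
  ext α β
  simp [weylMatrix, one_apply, eq_comm, funext_iff]

theorem weylMatrix_ne_zero [Nontrivial R] (d : (ι × Bool) →₀ ℕ) : weylMatrix n ζ d ≠ 0 := by
  intro h
  have h0 := congrFun (congrFun h 0) (fun i => 0 + (d (i, true) : Fin (n i)))
  simp [weylMatrix] at h0

theorem weylCocycle_ne_zero [IsDomain R] (hζ : ∀ i, ζ i ^ n i = 1) (d e : (ι × Bool) →₀ ℕ) :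
    weylCocycle ζ d e ≠ 0 :=
  prod_ne_zero_iff.2 fun i _ => pow_ne_zero _ fun h0 => by
    simpa [h0, zero_pow (NeZero.ne (n i))] using hζ i

theorem weylMatrix_mul [DecidableEq ι] (hζ : ∀ i, ζ i ^ n i = 1) (d e : (ι × Bool) →₀ ℕ) :
    weylMatrix n ζ d * weylMatrix n ζ e = weylCocycle ζ d e • weylMatrix n ζ (d + e) := by
  ext α β
  set γ : ∀ i, Fin (n i) := fun i => α i + (d (i, true) : Fin (n i))
  have hrow : ∀ δ, weylMatrix n ζ d α δ =
      if δ = γ then ∏ i, ζ i ^ (d (i, false) * α i) else 0 := fun δ => by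
    simp only [weylMatrix, of_apply, γ, funext_iff]
  simp only [mul_apply, hrow, ite_mul, zero_mul, sum_ite_eq', mem_univ, if_true,
    Matrix.smul_apply, smul_eq_mul]
  have hshift : (∀ i, β i = γ i + (e (i, true) : Fin (n i))) ↔
      ∀ i, β i = α i + ((d + e) (i, true) : Fin (n i)) := by
    simp only [γ, Finsupp.add_apply, Nat.cast_add, add_assoc]
  by_cases hβ : ∀ i, β i = γ i + (e (i, true) : Fin (n i))
  · simp only [weylMatrix, of_apply, if_pos hβ, if_pos (hshift.1 hβ), weylCocycle,
      ← prod_mul_distrib]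
    refine prod_congr rfl fun i _ => ?_
    rw [pow_mul_val_add_natCast (hζ i), Finsupp.add_apply, add_mul, pow_add]
    ring
  · simp only [weylMatrix, of_apply, if_neg hβ, if_neg (mt hshift.2 hβ), mul_zero]

end Weyl

section WeylSpan

variable {ι : Type*} [Fintype ι] (n : ι → ℕ) [∀ i, NeZero (n i)]
  {R : Type*} [CommRing R] (ζ : ι → R)

noncomputable def weylMonomial (d : (ι × Bool) →₀ ℕ) :
    Matrix (∀ i, Fin (n i)) (∀ i, Fin (n i)) (MvPolynomial (ι × Bool) R) :=
  (weylMatrix n ζ d).map (monomial d)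

theorem weylMonomial_zero [DecidableEq ι] : weylMonomial n ζ 0 = 1 := by
  rw [weylMonomial, weylMatrix_zero]
  exact Matrix.map_one _ (map_zero _) one_def.symm

theorem weylMonomial_mul [DecidableEq ι] (hζ : ∀ i, ζ i ^ n i = 1) (d e : (ι × Bool) →₀ ℕ) :
    weylMonomial n ζ d * weylMonomial n ζ e = weylCocycle ζ d e • weylMonomial n ζ (d + e) := by
  ext α β
  simp only [weylMonomial, mul_apply, map_apply, monomial_mul]
  rw [← map_sum, ← mul_apply, weylMatrix_mul n ζ hζ, Matrix.smul_apply, Matrix.smul_apply,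
    map_apply, smul_monomial]

theorem mapMatrix_lcoeff_weylMonomial (f d : (ι × Bool) →₀ ℕ) :
    LinearMap.mapMatrix (lcoeff R f) (weylMonomial n ζ d) =
      if d = f then weylMatrix n ζ f else 0 := by
  classical
  ext α β
  split_ifs with h <;> simp [weylMonomial, coeff_monomial, h]

noncomputable def weylSpan :
    Submodule R (Matrix (∀ i, Fin (n i)) (∀ i, Fin (n i)) (MvPolynomial (ι × Bool) R)) :=
  Submodule.span R (Set.range (weylMonomial n ζ))

theorem weylMonomial_mem_weylSpan (d : (ι × Bool) →₀ ℕ) : weylMonomial n ζ d ∈ weylSpan n ζ :=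
  Submodule.subset_span ⟨d, rfl⟩

theorem one_mem_weylSpan [DecidableEq ι] : 1 ∈ weylSpan n ζ :=
  weylMonomial_zero n ζ ▸ weylMonomial_mem_weylSpan n ζ 0

theorem sum_weylMonomial_mul [DecidableEq ι] (hζ : ∀ i, ζ i ^ n i = 1)
    (c e : ((ι × Bool) →₀ ℕ) →₀ R) :
    (c.sum fun d a => a • weylMonomial n ζ d) * (e.sum fun d a => a • weylMonomial n ζ d) =
      ∑ a ∈ c.support, ∑ b ∈ e.support,
        (c a * e b * weylCocycle ζ a b) • weylMonomial n ζ (a + b) := by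
  rw [Finsupp.sum, Finsupp.sum, sum_mul]
  simp only [mul_sum, smul_mul_smul_comm, weylMonomial_mul n ζ hζ, smul_smul]

theorem mul_mem_weylSpan [DecidableEq ι] (hζ : ∀ i, ζ i ^ n i = 1) {x y} (hx : x ∈ weylSpan n ζ)
    (hy : y ∈ weylSpan n ζ) : x * y ∈ weylSpan n ζ := by
  obtain ⟨c, rfl⟩ := Finsupp.mem_span_range_iff_exists_finsupp.1 hx
  obtain ⟨e, rfl⟩ := Finsupp.mem_span_range_iff_exists_finsupp.1 hy
  rw [sum_weylMonomial_mul n ζ hζ]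
  exact Submodule.sum_mem _ fun a _ => Submodule.sum_mem _ fun b _ =>
    Submodule.smul_mem _ _ (weylMonomial_mem_weylSpan n ζ _)

/-- Comparing coefficients at the unique sum `d₀ + e₀` of the supports of `x` and `y`, as in the
proof that monoid algebras over unique-sums monoids have no zero divisors. -/
theorem mul_ne_zero_of_mem_weylSpan [DecidableEq ι] [IsDomain R] (hζ : ∀ i, ζ i ^ n i = 1) {x y}
    (hx : x ∈ weylSpan n ζ) (hy : y ∈ weylSpan n ζ) (hx0 : x ≠ 0) (hy0 : y ≠ 0) :
    x * y ≠ 0 := by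
  obtain ⟨c, rfl⟩ := Finsupp.mem_span_range_iff_exists_finsupp.1 hx
  obtain ⟨e, rfl⟩ := Finsupp.mem_span_range_iff_exists_finsupp.1 hy
  have hc : c.support.Nonempty := Finsupp.support_nonempty_iff.2 (by rintro rfl; simp at hx0)
  have he : e.support.Nonempty := Finsupp.support_nonempty_iff.2 (by rintro rfl; simp at hy0)
  obtain ⟨d₀, hd₀, e₀, he₀, huniq⟩ := UniqueSums.uniqueAdd_of_nonempty hc he
  have hcoeff : (LinearMap.mapMatrix (lcoeff R (d₀ + e₀)))
      ((c.sum fun d a => a • weylMonomial n ζ d) * (e.sum fun d a => a • weylMonomial n ζ d)) =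
      (c d₀ * e e₀ * weylCocycle ζ d₀ e₀) • weylMatrix n ζ (d₀ + e₀) := by
    rw [sum_weylMonomial_mul n ζ hζ, map_sum, sum_eq_single d₀, map_sum, sum_eq_single e₀]
    · rw [LinearMap.map_smul, mapMatrix_lcoeff_weylMonomial, if_pos rfl]
    · intro b hb hb₀
      rw [LinearMap.map_smul, mapMatrix_lcoeff_weylMonomial,
        if_neg fun h => hb₀ (huniq hd₀ hb h).2, smul_zero]
    · exact fun h => absurd he₀ h
    · intro a ha ha₀
      refine map_sum _ _ _ |>.trans (sum_eq_zero fun b hb => ?_)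
      rw [LinearMap.map_smul, mapMatrix_lcoeff_weylMonomial,
        if_neg fun h => ha₀ (huniq ha hb h).1, smul_zero]
    · exact fun h => absurd hd₀ h
  intro h0
  rw [h0, map_zero] at hcoeff
  exact smul_ne_zero (mul_ne_zero (mul_ne_zero (Finsupp.mem_support_iff.1 hd₀)
    (Finsupp.mem_support_iff.1 he₀)) (weylCocycle_ne_zero n ζ hζ d₀ e₀))
    (weylMatrix_ne_zero n ζ _) hcoeff.symm

end WeylSpan

section Tau

variable {ι : Type*} [Fintype ι] [DecidableEq ι] {m : ι → ℕ} {R : Type*} [CommRing R]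

theorem tau_apply (i : ι) (A : Matrix (Fin (m i)) (Fin (m i)) R) (α β : ∀ j, Fin (m j)) :
    tau m i A α β = if ∀ j ≠ i, α j = β j then A (α i) (β i) else 0 := by
  simp only [tau, of_apply, prod_boole, mem_erase, mem_univ, and_true, mul_ite, mul_one,
    mul_zero]

theorem tau_map {S : Type*} [CommRing S] {f : R → S} (hf : f 0 = 0) (i : ι)
    (A : Matrix (Fin (m i)) (Fin (m i)) R) : (tau m i A).map f = tau m i (A.map f) := by
  ext α β
  simp only [map_apply, tau_apply, apply_ite f, hf]

theorem tau_sum_smul {S κ : Type*} [Monoid S] [DistribMulAction S R] (s : Finset κ) (i : ι)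
    (c : κ → S) (A : κ → Matrix (Fin (m i)) (Fin (m i)) R) :
    tau m i (∑ x ∈ s, c x • A x) = ∑ x ∈ s, c x • tau m i (A x) := by
  ext α β
  simp only [tau_apply, Matrix.sum_apply, Matrix.smul_apply]
  split_ifs <;> simp

end Tau

section Slot

variable {ι : Type*} (n : ι → ℕ) {R : Type*} [CommRing R] (ζ : ι → R)

noncomputable def slotDegree (i : ι) (w : Fin (n i) × Fin (n i)) : (ι × Bool) →₀ ℕ :=
  Finsupp.single (i, false) (w.1 : ℕ) + Finsupp.single (i, true) (w.2 : ℕ)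

theorem slotDegree_apply [DecidableEq ι] (i : ι) (w : Fin (n i) × Fin (n i)) (j : ι) (b : Bool) :
    slotDegree n i w (j, b) = if j = i then (if b then w.2 else w.1 : ℕ) else 0 := by
  by_cases h : j = i
  · subst h
    cases b <;> simp [slotDegree]
  · cases b <;> simp [slotDegree, h]

noncomputable def slotWeylMonomial (i : ι) (w : Fin (n i) × Fin (n i)) :
    Matrix (Fin (n i)) (Fin (n i)) (MvPolynomial (ι × Bool) R) :=
  of fun α β => monomial (slotDegree n i w) (if β = α + w.2 then ζ i ^ (w.1 * α : ℕ) else 0)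

theorem tau_slotWeylMonomial [Fintype ι] [DecidableEq ι] [∀ i, NeZero (n i)] (i : ι)
    (w : Fin (n i) × Fin (n i)) :
    tau n i (slotWeylMonomial n ζ i w) = weylMonomial n ζ (slotDegree n i w) := by
  ext α β
  have hshift : (∀ j, β j = α j + (slotDegree n i w (j, true) : Fin (n j))) ↔
      (∀ j ≠ i, α j = β j) ∧ β i = α i + w.2 := by
    constructor
    · intro h
      refine ⟨fun j hj => ?_, by simpa [slotDegree_apply] using h i⟩
      simpa [slotDegree_apply, hj, eq_comm] using h j
    · rintro ⟨hne, hi⟩ j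
      by_cases hj : j = i
      · subst hj
        simpa [slotDegree_apply] using hi
      · simpa [slotDegree_apply, hj, eq_comm] using hne j hj
  have hclock : ∏ j, ζ j ^ (slotDegree n i w (j, false) * α j) = ζ i ^ (w.1 * α i : ℕ) := by
    rw [prod_eq_single i (fun j _ hj => by simp [slotDegree_apply, hj]) (by simp)]
    simp [slotDegree_apply]
  simp only [tau_apply, slotWeylMonomial, weylMonomial, weylMatrix, of_apply, map_apply, hshift,
    hclock, ite_and]
  split_ifs <;> simp

end Slot

section ClockShift

variable {K : Type*} [Field K]

theorem sum_fin_pow_eq_zero {m : ℕ} {y : K} (hy : y ^ m = 1) (hy1 : y ≠ 1) :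
    ∑ α : Fin m, y ^ (α : ℕ) = 0 := by
  rw [Fin.sum_univ_eq_sum_range (y ^ ·), geom_sum_eq hy1, hy, sub_self, zero_div]

/-- Row `(a, b)` lists the entries `(α, β)` of `C ^ a * S ^ b`, with `C = diag (z ^ α)` the clock
and `S` the shift matrix. -/
def clockShiftMatrix (z : K) (m : ℕ) : Matrix (Fin m × Fin m) (Fin m × Fin m) K :=
  of fun w u => if u.2 = u.1 + w.2 then z ^ (w.1 * u.1 : ℕ) else 0

theorem clockShiftMatrix_mul_transpose_inv {z : K} {m : ℕ} [NeZero m] (hz : IsPrimitiveRoot z m) :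
    clockShiftMatrix z m * (clockShiftMatrix z⁻¹ m)ᵀ = (m : K) • 1 := by
  have hz0 : z ≠ 0 := hz.ne_zero (NeZero.ne m)
  ext w w'
  have hrow : ∀ α : Fin m, ∑ β : Fin m, clockShiftMatrix z m w (α, β) *
      clockShiftMatrix z⁻¹ m w' (α, β) =
      if w.2 = w'.2 then (z ^ (w.1 : ℕ) * (z ^ (w'.1 : ℕ))⁻¹) ^ (α : ℕ) else 0 := by
    intro α
    by_cases h2 : w.2 = w'.2
    · simp [clockShiftMatrix, h2, mul_pow, ← pow_mul, mul_comm]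
    · simp [clockShiftMatrix, h2, Ne.symm h2]
  simp only [mul_apply, transpose_apply, Fintype.sum_prod_type, hrow, Matrix.smul_apply,
    one_apply, Prod.ext_iff, smul_eq_mul, mul_ite, mul_one, mul_zero]
  by_cases h2 : w.2 = w'.2
  · by_cases h1 : w.1 = w'.1
    · simp [h1, h2, hz0]
    · have hy1 : z ^ (w.1 : ℕ) * (z ^ (w'.1 : ℕ))⁻¹ ≠ 1 := by
        rw [Ne, mul_inv_eq_one₀ (pow_ne_zero _ hz0)]
        exact fun h => h1 (Fin.ext (hz.pow_inj w.1.isLt w'.1.isLt h))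
      have hym : (z ^ (w.1 : ℕ) * (z ^ (w'.1 : ℕ))⁻¹) ^ m = 1 := by
        rw [mul_pow, inv_pow, ← pow_mul, ← pow_mul, mul_comm (w.1 : ℕ), mul_comm (w'.1 : ℕ),
          pow_mul, pow_mul, hz.pow_eq_one, one_pow, one_pow, inv_one, mul_one]
      simp [h1, h2, sum_fin_pow_eq_zero hym hy1]
  · simp [h2]

theorem isUnit_det_clockShiftMatrix {z : K} {m : ℕ} [NeZero m] (hz : IsPrimitiveRoot z m) :
    IsUnit (clockShiftMatrix z m).det := by
  have hm : (m : K) ≠ 0 := hz.neZero'.out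
  refine isUnit_det_of_right_inverse (B := (m : K)⁻¹ • (clockShiftMatrix z⁻¹ m)ᵀ) ?_
  rw [mul_smul_comm, clockShiftMatrix_mul_transpose_inv hz, smul_smul, inv_mul_cancel₀ hm,
    one_smul]

end ClockShift

section Specialization

variable {k : Type*} [Field k] {K : Type*} [Field K] [Algebra k K] {G : ℕ} (g n : Fin G → ℕ)
  (ζ : Fin G → K)

/-- Sends the generic matrix `x^(i)_j` to `∑_{a,b} y^(i)_{jab} s_i^a t_i^b C_i^a S_i^b`, where the
`y^(i)_{jab}` are fresh commuting variables (reusing the index set of the `ζ^(i)_{jαβ}`), `s_i, t_i`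
are the variables `(i, false), (i, true)`, and `C_i, S_i` are clock and shift matrices. -/
noncomputable def weylSpecialization :
    MvPolynomial (ZetaIdx g n) k →ₐ[k]
      MvPolynomial (Fin G × Bool) (MvPolynomial (ZetaIdx g n) K) :=
  aeval fun v => ∑ w : Fin (n v.1) × Fin (n v.1),
    (X ⟨v.1, (v.2.1, w)⟩ : MvPolynomial (ZetaIdx g n) K) •
      slotWeylMonomial n (C ∘ ζ : Fin G → MvPolynomial (ZetaIdx g n) K) v.1 w v.2.2.1 v.2.2.2

theorem map_weylSpecialization_tau_genMat [∀ i, NeZero (n i)] (i : Fin G) (j : Fin (g i)) :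
    (tau n i (genMat k g n i j)).map (weylSpecialization g n ζ) =
      ∑ w : Fin (n i) × Fin (n i), (X ⟨i, (j, w)⟩ : MvPolynomial (ZetaIdx g n) K) •
        weylMonomial n (C ∘ ζ : Fin G → MvPolynomial (ZetaIdx g n) K) (slotDegree n i w) := by
  have hgen : (genMat k g n i j).map (weylSpecialization g n ζ) =
      ∑ w : Fin (n i) × Fin (n i), (X ⟨i, (j, w)⟩ : MvPolynomial (ZetaIdx g n) K) •
        slotWeylMonomial n (C ∘ ζ : Fin G → MvPolynomial (ZetaIdx g n) K) i w := by
    ext α β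
    simp [genMat, weylSpecialization, Matrix.sum_apply]
  simp only [tau_map (map_zero _), hgen, tau_sum_smul, tau_slotWeylMonomial]

theorem map_weylSpecialization_mem_weylSpan [∀ i, NeZero (n i)] (hζ : ∀ i, ζ i ^ n i = 1)
    {p : Matrix (∀ i, Fin (n i)) (∀ i, Fin (n i)) (MvPolynomial (ZetaIdx g n) k)}
    (hp : p ∈ GM k g n) :
    p.map (weylSpecialization g n ζ) ∈
      weylSpan n (C ∘ ζ : Fin G → MvPolynomial (ZetaIdx g n) K) := by
  have hζC : ∀ i, (C (ζ i) : MvPolynomial (ZetaIdx g n) K) ^ n i = 1 := fun i => by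
    rw [← map_pow, hζ i, map_one]
  induction hp using Algebra.adjoin_induction with
  | mem x hx =>
    obtain ⟨i, j, rfl⟩ := hx
    rw [map_weylSpecialization_tau_genMat]
    exact Submodule.sum_mem _ fun w _ =>
      Submodule.smul_mem _ _ (weylMonomial_mem_weylSpan n _ _)
  | algebraMap r =>
    rw [← AlgHom.mapMatrix_apply, AlgHom.commutes, Algebra.algebraMap_eq_smul_one]
    exact Submodule.smul_of_tower_mem _ r (one_mem_weylSpan n _)
  | add x y _ _ hx hy =>
    rw [← AlgHom.mapMatrix_apply, map_add]
    exact Submodule.add_mem _ hx hy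
  | mul x y _ _ hx hy =>
    rw [← AlgHom.mapMatrix_apply, map_mul]
    exact mul_mem_weylSpan n _ hζC hx hy

theorem eval_one_weylSpecialization_X (v : ZetaIdx g n) :
    eval 1 (weylSpecialization (k := k) g n ζ (X v)) =
      ∑ w, C (clockShiftMatrix (ζ v.1) (n v.1) w v.2.2) * X ⟨v.1, (v.2.1, w)⟩ := by
  simp [weylSpecialization, slotWeylMonomial, clockShiftMatrix, eval_monomial, mul_comm,
    apply_ite C]

noncomputable def inverseClockShiftSubst :
    MvPolynomial (ZetaIdx g n) K →ₐ[K] MvPolynomial (ZetaIdx g n) K :=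
  aeval fun v => ∑ u, C ((clockShiftMatrix (ζ v.1) (n v.1))⁻¹ u v.2.2) * X ⟨v.1, (v.2.1, u)⟩

theorem inverseClockShiftSubst_eval_one_weylSpecialization [∀ i, NeZero (n i)]
    (hζ : ∀ i, IsPrimitiveRoot (ζ i) (n i)) (f : MvPolynomial (ZetaIdx g n) k) :
    inverseClockShiftSubst g n ζ (eval 1 (weylSpecialization g n ζ f)) =
      map (algebraMap k K) f := by
  induction f using MvPolynomial.induction_on with
  | C a => simp [weylSpecialization, inverseClockShiftSubst]
  | add p q hp hq => simp only [map_add, hp, hq]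
  | mul_X p v hp =>
    simp only [map_mul, hp, map_X, eval_one_weylSpecialization_X]
    congr 1
    obtain ⟨i, j, x⟩ := v
    set Q := clockShiftMatrix (ζ i) (n i)
    trans ∑ u, C ((Q⁻¹ * Q) u x) * X ⟨i, (j, u)⟩
    · simp only [inverseClockShiftSubst, map_sum, map_mul, aeval_C, aeval_X, mul_apply, mul_sum,
        sum_mul, Q]
      rw [sum_comm]
      refine sum_congr rfl fun u _ => sum_congr rfl fun w _ => ?_
      simp only [algebraMap_eq]
      ring
    · simp [Q, nonsing_inv_mul _ (isUnit_det_clockShiftMatrix (hζ i)), one_apply]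

theorem weylSpecialization_injective [∀ i, NeZero (n i)] (hζ : ∀ i, IsPrimitiveRoot (ζ i) (n i)) :
    Function.Injective (weylSpecialization (k := k) g n ζ) := fun f f' h =>
  map_injective _ (algebraMap k K).injective <| by
    rw [← inverseClockShiftSubst_eval_one_weylSpecialization g n ζ hζ,
      ← inverseClockShiftSubst_eval_one_weylSpecialization g n ζ hζ, h]

theorem mul_ne_zero_of_mem_GM [∀ i, NeZero (n i)] (hζ : ∀ i, IsPrimitiveRoot (ζ i) (n i))
    {p q : Matrix (∀ i, Fin (n i)) (∀ i, Fin (n i)) (MvPolynomial (ZetaIdx g n) k)}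
    (hp : p ∈ GM k g n) (hq : q ∈ GM k g n) (hp0 : p ≠ 0) (hq0 : q ≠ 0) : p * q ≠ 0 := by
  have hζC : ∀ i, (C ∘ ζ : Fin G → MvPolynomial (ZetaIdx g n) K) i ^ n i = 1 := fun i => by
    rw [Function.comp_apply, ← map_pow, (hζ i).pow_eq_one, map_one]
  have hinj := Matrix.map_injective (m := ∀ i, Fin (n i)) (n := ∀ i, Fin (n i))
    (weylSpecialization_injective (k := k) g n ζ hζ)
  have hψ0 : (0 : Matrix (∀ i, Fin (n i)) (∀ i, Fin (n i)) (MvPolynomial (ZetaIdx g n) k)).map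
      (weylSpecialization g n ζ) = 0 :=
    Matrix.map_zero _ (map_zero _)
  intro hpq
  refine mul_ne_zero_of_mem_weylSpan n _ hζC
    (map_weylSpecialization_mem_weylSpan g n ζ (fun i => (hζ i).pow_eq_one) hp)
    (map_weylSpecialization_mem_weylSpan g n ζ (fun i => (hζ i).pow_eq_one) hq)
    ((hinj.ne_iff' hψ0).2 hp0) ((hinj.ne_iff' hψ0).2 hq0) ?_
  rw [← AlgHom.mapMatrix_apply, ← AlgHom.mapMatrix_apply, ← map_mul, hpq, map_zero]

end Specialization

end MultipartiteGenericMatrix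

open MultipartiteGenericMatrix in
/-- from Proposition 2.3. The algebra of multipartite generic matrices
`GM_{n_1,…,n_G}(x)` is a domain: a product of two of its elements vanishes only if one of the
factors does. (This expresses that the ring of central quotients of `GM_{n_1,…,n_G}(x)` is a
skew field.) -/
theorem GM_is_domain {k : Type*} [Field k] [CharZero k] {G : ℕ} (g n : Fin G → ℕ)
    (p q : Matrix (∀ j, Fin (n j)) (∀ j, Fin (n j)) (MvPolynomial (ZetaIdx g n) k))
    (hp : p ∈ GM k g n) (hq : q ∈ GM k g n) (h : p * q = 0) :
    p = 0 ∨ q = 0 := by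
  rcases em (∃ i, n i = 0) with ⟨i, hi⟩ | hn
  · have : IsEmpty (∀ j, Fin (n j)) := ⟨fun α => (hi ▸ α i).elim0⟩
    exact Or.inl (Subsingleton.elim _ _)
  rw [not_exists] at hn
  have : ∀ i, NeZero (n i) := fun i => ⟨hn i⟩
  -- `CharZero` makes `(n i : AlgebraicClosure k) ≠ 0`, so primitive `n i`-th roots exist.
  have hroots : ∀ i, ∃ z : AlgebraicClosure k, IsPrimitiveRoot z (n i) := fun i =>
    HasEnoughRootsOfUnity.exists_primitiveRoot _ _
  choose ζ hζ using hroots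
  by_contra! hpq
  exact mul_ne_zero_of_mem_GM g n ζ hζ hp hq hpq.1 hpq.2 h
end

section
/- Let k be a field of characteristic 0, D a division ring that is a k-algebra, and A a k-algebra such that D ⊗_k A is a domain. Let Z = {Z_1,…,Z_g} and let p_1, p_2 ∈ D ⊗_k k⟨Z⟩, where k⟨Z⟩ is the free k-algebra on Z. For a ∈ A^g let p(a) ∈ D ⊗_k A denote the image of p under the k-algebra homomorphism id_D ⊗ ev_a, where ev_a : k⟨Z⟩ → A is determined by Z_i ↦ a_i. If p_1(a)·p_2(a) = 0 for every a ∈ A^g, then p_1(a) = 0 for all a ∈ A^g, or p_2(a) = 0 for all a ∈ A^g. -/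
open scoped TensorProduct

/-!
Suppose `p₁(a) ≠ 0` and `p₂(b) ≠ 0`. Substituting the affine line `a + X (b - a)` for the
variables gives polynomials `P₁, P₂ ∈ (D ⊗ A)[X]` whose values at `t ∈ k` are `pᵢ(a + t (b - a))`.
So `P₁ P₂` vanishes at every point of the infinite field `k`, hence is the zero polynomial.
As `D ⊗ A` has no zero divisors, neither has `(D ⊗ A)[X]`, so `P₁ = 0` or `P₂ = 0`;
evaluating at `t = 0` or `t = 1` contradicts `p₁(a) ≠ 0` or `p₂(b) ≠ 0`.
-/

namespace Polynomial

section Semiring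

variable {k R : Type*} [CommSemiring k] [Semiring R] [Algebra k R]

variable (R) in
noncomputable def evalScalar (t : k) : R[X] →ₐ[k] R :=
  eval₂AlgHom (AlgHom.id k R) (algebraMap k R t) fun r => (Algebra.commutes t r).symm

@[simp]
theorem evalScalar_apply (t : k) (p : R[X]) : evalScalar R t p = p.eval (algebraMap k R t) :=
  rfl

theorem commute_C_of_forall_commute_coeff {x : R} {p : R[X]} (h : ∀ n, Commute x (p.coeff n)) :
    Commute (C x) p := by
  ext n
  simp [coeff_C_mul, coeff_mul_C, (h n).eq]

end Semiring

/-- Since `R` need not be commutative, each linear functional `φ` is applied coefficientwise,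
turning `p` into a polynomial over `k` that vanishes on all of `k`. -/
theorem eq_zero_of_forall_evalScalar_eq_zero {k R : Type*} [Field k] [Infinite k] [Ring R]
    [Algebra k R] {p : R[X]} (h : ∀ t : k, evalScalar R t p = 0) : p = 0 := by
  ext n
  rw [coeff_zero, ← Module.forall_dual_apply_eq_zero_iff k]
  intro φ
  let q : k[X] := ∑ e ∈ p.support, monomial e (φ (p.coeff e))
  have hq : q = 0 := zero_of_eval_zero q fun t => by
    have hφ := congrArg φ (h t)
    simp only [evalScalar_apply, eval_eq_sum, sum_def, map_sum, ← map_pow, ← Algebra.commutes,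
      ← Algebra.smul_def, map_smul, map_zero] at hφ
    simpa [q, eval_finsetSum, mul_comm] using hφ
  have hqn := congrArg (coeff · n) hq
  simp only [q, finsetSum_coeff, coeff_monomial, Finset.sum_ite_eq', mem_support_iff] at hqn
  by_cases hn : p.coeff n = 0 <;> simp_all

end Polynomial

namespace Algebra.TensorProduct

open Polynomial

variable {k D A : Type*} [CommSemiring k] [Semiring D] [Algebra k D] [Semiring A] [Algebra k A]

noncomputable def tensorPolynomial : D ⊗[k] A[X] →ₐ[k] (D ⊗[k] A)[X] :=
  lift (CAlgHom.comp includeLeft) (mapAlgHom includeRight) fun _ _ =>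
    commute_C_of_forall_commute_coeff fun _ => by
      simpa [mapAlgHom] using (Commute.one_right _).tmul (Commute.one_left _)

theorem tensorPolynomial_tmul (d : D) (p : A[X]) :
    tensorPolynomial (d ⊗ₜ p) =
      C (d ⊗ₜ[k] (1 : A)) * p.map (includeRight (R := k) (A := D) (B := A) : A →+* D ⊗[k] A) :=
  rfl

theorem evalScalar_comp_tensorPolynomial (t : k) :
    (evalScalar (D ⊗[k] A) t).comp tensorPolynomial = map (AlgHom.id k D) (evalScalar A t) := by
  refine ext' fun d p => ?_
  simp only [AlgHom.comp_apply, evalScalar_apply, map_tmul, AlgHom.id_apply]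
  rw [tensorPolynomial_tmul, eval_C_mul, eval_map, ← includeRight.commutes t,
    ← AlgHom.coe_toRingHom, eval₂_at_apply]
  simp

end Algebra.TensorProduct

namespace FreeAlgebra

open Polynomial Algebra.TensorProduct

variable {k D A ι : Type*} [CommSemiring k] [Semiring D] [Algebra k D] [Ring A] [Algebra k A]

noncomputable def liftAffineLine (a b : ι → A) : FreeAlgebra k ι →ₐ[k] A[X] :=
  lift k fun i => C (a i) + C (b i - a i) * X

theorem evalScalar_comp_liftAffineLine (a b : ι → A) (t : k) :
    (evalScalar A t).comp (liftAffineLine a b) = lift k (a + t • (b - a)) := by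
  ext i
  simp [liftAffineLine, eval_mul_X, ← Algebra.commutes, Algebra.smul_def]

variable (D) in
noncomputable def tensorLiftAffineLine (a b : ι → A) :
    D ⊗[k] FreeAlgebra k ι →ₐ[k] (D ⊗[k] A)[X] :=
  tensorPolynomial.comp (map (AlgHom.id k D) (liftAffineLine a b))

theorem evalScalar_tensorLiftAffineLine (a b : ι → A) (t : k) (p : D ⊗[k] FreeAlgebra k ι) :
    evalScalar (D ⊗[k] A) t (tensorLiftAffineLine D a b p) =
      map (AlgHom.id k D) (lift k (a + t • (b - a))) p := by
  rw [tensorLiftAffineLine, ← AlgHom.comp_apply, ← AlgHom.comp_assoc,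
    evalScalar_comp_tensorPolynomial, ← Algebra.TensorProduct.map_comp, AlgHom.comp_id,
    evalScalar_comp_liftAffineLine]

end FreeAlgebra

open FreeAlgebra Polynomial in
theorem tensor_free_algebra_zero_product_general {k : Type*} [Field k] [CharZero k]
    (D : Type*) [DivisionRing D] [Algebra k D]
    (A : Type*) [Ring A] [Algebra k A]
    (hdom : ∀ x y : D ⊗[k] A, x * y = 0 → x = 0 ∨ y = 0)
    (g : ℕ) (p₁ p₂ : D ⊗[k] FreeAlgebra k (Fin g))
    (h : ∀ a : Fin g → A,
      Algebra.TensorProduct.map (AlgHom.id k D) (FreeAlgebra.lift k a) p₁ *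
        Algebra.TensorProduct.map (AlgHom.id k D) (FreeAlgebra.lift k a) p₂ = 0) :
    (∀ a : Fin g → A,
      Algebra.TensorProduct.map (AlgHom.id k D) (FreeAlgebra.lift k a) p₁ = 0) ∨
    (∀ a : Fin g → A,
      Algebra.TensorProduct.map (AlgHom.id k D) (FreeAlgebra.lift k a) p₂ = 0) := by
  by_contra! ⟨⟨a, ha⟩, b, hb⟩
  have : NoZeroDivisors (D ⊗[k] A) := ⟨hdom _ _⟩
  have hprod : tensorLiftAffineLine D a b p₁ * tensorLiftAffineLine D a b p₂ = 0 :=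
    eq_zero_of_forall_evalScalar_eq_zero fun t => by
      rw [map_mul, evalScalar_tensorLiftAffineLine, evalScalar_tensorLiftAffineLine]
      exact h _
  rcases mul_eq_zero.1 hprod with h₁ | h₂
  · exact ha (by simpa [h₁] using (evalScalar_tensorLiftAffineLine a b (0 : k) p₁).symm)
  · exact hb (by simpa [h₂] using (evalScalar_tensorLiftAffineLine a b (1 : k) p₂).symm)

/-- Lemma 4.3. Let `D` be a division ring that is a `k`-algebra and `A`
a `k`-algebra such that `D ⊗_k A` is a domain. If `p₁, p₂ ∈ D ⊗_k k⟨Z⟩` satisfy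
`p₁(a) p₂(a) = 0` for every `a ∈ A^g` (where `p(a)` is the image of `p` under
`id_D ⊗ ev_a`), then `p₁(a) = 0` for all `a ∈ A^g` or `p₂(a) = 0` for all `a ∈ A^g`. -/
theorem tensor_free_algebra_zero_product {k : Type*} [Field k] [CharZero k]
    (D : Type*) [DivisionRing D] [Algebra k D]
    (A : Type*) [Ring A] [Algebra k A]
    (hnt : Nontrivial (D ⊗[k] A))
    (hdom : ∀ x y : D ⊗[k] A, x * y = 0 → x = 0 ∨ y = 0)
    (g : ℕ) (p₁ p₂ : D ⊗[k] FreeAlgebra k (Fin g))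
    (h : ∀ a : Fin g → A,
      Algebra.TensorProduct.map (AlgHom.id k D) (FreeAlgebra.lift k a) p₁ *
        Algebra.TensorProduct.map (AlgHom.id k D) (FreeAlgebra.lift k a) p₂ = 0) :
    (∀ a : Fin g → A,
      Algebra.TensorProduct.map (AlgHom.id k D) (FreeAlgebra.lift k a) p₁ = 0) ∨
    (∀ a : Fin g → A,
      Algebra.TensorProduct.map (AlgHom.id k D) (FreeAlgebra.lift k a) p₂ = 0) :=
  tensor_free_algebra_zero_product_general D A hdom g p₁ p₂ h
end

section
/- Let k be a field of characteristic 0, D a division ring that is a k-algebra, and m, g ∈ ℕ. Let k[ξ] be the commutative polynomial ring over k in indeterminates ξ_{iαβ} (1 ≤ i ≤ g, 1 ≤ α,β ≤ m), let z_i ∈ Mat_m(k[ξ]) be the generic matrix with (α,β) entry ξ_{iαβ}, and let GM_m(z) be the unital k-subalgebra of Mat_m(k[ξ]) generated by z_1,…,z_g. Then D ⊗_k GM_m(z) is a domain: it is nontrivial, and for all u, v ∈ D ⊗_k GM_m(z), u·v = 0 implies u = 0 or v = 0. -/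
open scoped TensorProduct

set_option synthInstance.maxHeartbeats 1000000
set_option maxHeartbeats 1000000

/-- The generic `m × m` matrix `z_i`, with `(α,β)` entry the indeterminate `ξ_{iαβ}`. -/
noncomputable def genericMatrix (k : Type*) [Field k] (g m : ℕ) (i : Fin g) :
    Matrix (Fin m) (Fin m) (MvPolynomial (Fin g × Fin m × Fin m) k) :=
  Matrix.of fun α β => MvPolynomial.X (i, α, β)

/-- The algebra `GM_m(z)` of `g` generic `m × m` matrices over `k`: the unital
`k`-subalgebra of `Mat_m(k[ξ])` generated by `z_1, …, z_g`. -/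
noncomputable def genericMatrixAlgebra (k : Type*) [Field k] (g m : ℕ) :
    Subalgebra k (Matrix (Fin m) (Fin m) (MvPolynomial (Fin g × Fin m × Fin m) k)) :=
  Algebra.adjoin k (Set.range (genericMatrix k g m))

/-!
Let `R = k[x_{(i,n),j}]` (`j ∈ ℤ/m`) and let `σ` be the automorphism of order `m` shifting `j`
by one. The skew polynomial ring `R[t; σ]` embeds in `Mat_m(R[X])`: `t` acts as the cyclic shift
matrix with `X = t^m` in its wrap-around entry, and `r ∈ R` as `diag(r, σ r, …, σ^(m-1) r)`.
Sending `z_i` to `∑ₙ x_{(i,n),0} tⁿ` embeds `GM_m(z)` in `Mat_m(R[X])`, since at `X = 1` the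
substitution is an injective renaming of variables. As `k` is a field, tensoring with `D` keeps
this injective, and the image of `D ⊗ GM_m(z)` lies in a copy of `(D ⊗ R)[t; σ]`. Finally
`D ⊗ R` embeds in the monoid algebra `D[ℕ^(vars)]`, which has no zero divisors, so the
lowest-degree terms of a product in `(D ⊗ R)[t; σ]` cannot cancel.
-/

open scoped Fin.NatCast Fin.CommRing

theorem Nat.div_add_mod_add_div (a b m : ℕ) : a / m + (a % m + b) / m = (a + b) / m := by
  rcases Nat.eq_zero_or_pos m with rfl | hm
  · simp
  conv_rhs => rw [← Nat.mod_add_div a m, add_right_comm, Nat.add_mul_div_left _ _ hm]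
  ring

theorem Fin.val_add_natCast {m : ℕ} [NeZero m] (α : Fin m) (N : ℕ) :
    ((α + N : Fin m) : ℕ) = ((α : ℕ) + N) % m := by
  rw [Fin.val_add, Fin.val_natCast, Nat.add_mod_mod]

namespace TwistedGrading

variable {A B : Type*} [Semiring A] [Semiring B] (W : ℕ → B →+ A) (σ : ℕ → B → B)

theorem liftAddHom_mul_liftAddHom (hW : ∀ N M b b', W N b * W M b' = W (N + M) (b * σ N b'))
    (f g : ℕ →₀ B) :
    Finsupp.liftAddHom W f * Finsupp.liftAddHom W g =
      ∑ N ∈ f.support, ∑ M ∈ g.support, W (N + M) (f N * σ N (g M)) := by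
  simp only [Finsupp.liftAddHom_apply, Finsupp.sum, Finset.sum_mul_sum, hW]

theorem mul_mem_mrange_liftAddHom
    (hW : ∀ N M b b', W N b * W M b' = W (N + M) (b * σ N b')) {x y : A}
    (hx : x ∈ AddMonoidHom.mrange (Finsupp.liftAddHom W))
    (hy : y ∈ AddMonoidHom.mrange (Finsupp.liftAddHom W)) :
    x * y ∈ AddMonoidHom.mrange (Finsupp.liftAddHom W) := by
  obtain ⟨f, rfl⟩ := hx
  obtain ⟨g, rfl⟩ := hy
  rw [liftAddHom_mul_liftAddHom W σ hW]
  exact AddSubmonoid.sum_mem _ fun N _ => AddSubmonoid.sum_mem _ fun M _ =>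
    ⟨_, Finsupp.liftAddHom_apply_single _ _ _⟩

theorem liftAddHom_mul_ne_zero [NoZeroDivisors B]
    (hW : ∀ N M b b', W N b * W M b' = W (N + M) (b * σ N b'))
    (c : ℕ → A →+ B) (hc : ∀ N M b, c N (W M b) = if N = M then b else 0)
    (hσ : ∀ N b, b ≠ 0 → σ N b ≠ 0) {f g : ℕ →₀ B} (hf : f ≠ 0) (hg : g ≠ 0) :
    Finsupp.liftAddHom W f * Finsupp.liftAddHom W g ≠ 0 := by
  classical
  have hf' := Finsupp.support_nonempty_iff.2 hf
  have hg' := Finsupp.support_nonempty_iff.2 hg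
  set p := f.support.min' hf'
  set q := g.support.min' hg'
  have hp : f p ≠ 0 := Finsupp.mem_support_iff.1 (f.support.min'_mem hf')
  have hq : g q ≠ 0 := Finsupp.mem_support_iff.1 (g.support.min'_mem hg')
  have hlow : c (p + q) (Finsupp.liftAddHom W f * Finsupp.liftAddHom W g) = f p * σ p (g q) := by
    rw [liftAddHom_mul_liftAddHom W σ hW, map_sum, Finset.sum_eq_single p, map_sum,
      Finset.sum_eq_single q, hc, if_pos rfl]
    · intro M hM hMq
      rw [hc, if_neg (by have := g.support.min'_le M hM; omega)]
    · exact fun h => absurd (g.support.min'_mem hg') h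
    · intro N hN hNp
      rw [map_sum]
      refine Finset.sum_eq_zero fun M hM => ?_
      rw [hc, if_neg (by have := f.support.min'_le N hN; have := g.support.min'_le M hM; omega)]
    · exact fun h => absurd (f.support.min'_mem hf') h
  intro h
  rw [h, map_zero] at hlow
  exact mul_ne_zero hp (hσ p _ hq) hlow.symm

end TwistedGrading

section CyclicMatrix

variable {k R : Type*} [CommSemiring k] [CommSemiring R] [Algebra k R] (m : ℕ)
  (σ : R ≃ₐ[k] R)

noncomputable def twistedDiagonal : R →ₐ[k] Matrix (Fin m) (Fin m) (Polynomial R) :=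
  (Matrix.diagonalAlgHom k).comp
    (AlgHom.pi fun α => Polynomial.CAlgHom.comp (σ ^ (α : ℕ) : R ≃ₐ[k] R).toAlgHom)

theorem twistedDiagonal_apply (r : R) :
    twistedDiagonal m σ r = Matrix.diagonal fun α : Fin m => Polynomial.C ((σ ^ (α : ℕ)) r) :=
  rfl

variable [NeZero m]

/-- The `N`-th power of the cyclic shift matrix whose wrap-around entry is `X` (so `X = t^m`). -/
noncomputable def shiftMatrix (N : ℕ) : Matrix (Fin m) (Fin m) (Polynomial R) :=
  Matrix.of fun α β => if α + (N : Fin m) = β then Polynomial.X ^ (((α : ℕ) + N) / m) else 0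

theorem shiftMatrix_apply (N : ℕ) (α β : Fin m) :
    shiftMatrix (R := R) m N α β =
      if α + (N : Fin m) = β then Polynomial.X ^ (((α : ℕ) + N) / m) else 0 := rfl

theorem shiftMatrix_zero : shiftMatrix (R := R) m 0 = 1 := by
  ext α β : 1
  simp [shiftMatrix_apply, Matrix.one_apply, Nat.div_eq_of_lt α.isLt]

theorem shiftMatrix_mul (N M : ℕ) :
    shiftMatrix (R := R) m N * shiftMatrix m M = shiftMatrix m (N + M) := by
  ext α γ : 1
  rw [Matrix.mul_apply, Finset.sum_eq_single (α + N)]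
  · rw [shiftMatrix_apply, shiftMatrix_apply, shiftMatrix_apply, if_pos rfl, Nat.cast_add,
      ← add_assoc, Fin.val_add_natCast, ← add_assoc]
    split_ifs
    · rw [← pow_add, Nat.div_add_mod_add_div]
    · rw [mul_zero]
  · intro β _ hβ
    rw [shiftMatrix_apply, if_neg (Ne.symm hβ), zero_mul]
  · exact fun h => absurd (Finset.mem_univ _) h

variable {m σ}

theorem shiftMatrix_mul_twistedDiagonal (hσ : σ ^ m = 1) (N : ℕ) (r : R) :
    shiftMatrix m N * twistedDiagonal m σ r =
      twistedDiagonal m σ ((σ ^ N) r) * shiftMatrix m N := by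
  ext α β : 1
  rw [twistedDiagonal_apply, twistedDiagonal_apply, Matrix.mul_diagonal, Matrix.diagonal_mul,
    shiftMatrix_apply]
  split_ifs with h
  · subst h
    rw [mul_comm, Fin.val_add_natCast, ← pow_eq_pow_mod _ hσ, pow_add, AlgEquiv.mul_apply]
  · rw [zero_mul, mul_zero]

variable (m σ)

/-- The matrix of `r t^N ∈ R[t; σ]`. -/
noncomputable def twistedMonomial (N : ℕ) : R →ₗ[k] Matrix (Fin m) (Fin m) (Polynomial R) :=
  LinearMap.mulRight k (shiftMatrix m N) ∘ₗ (twistedDiagonal m σ).toLinearMap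

theorem twistedMonomial_apply (N : ℕ) (r : R) :
    twistedMonomial m σ N r = twistedDiagonal m σ r * shiftMatrix m N := rfl

theorem twistedMonomial_zero_one : twistedMonomial m σ 0 1 = 1 := by
  rw [twistedMonomial_apply, map_one, shiftMatrix_zero, one_mul]

variable {m σ}

theorem twistedMonomial_mul (hσ : σ ^ m = 1) (N M : ℕ) (r r' : R) :
    twistedMonomial m σ N r * twistedMonomial m σ M r' =
      twistedMonomial m σ (N + M) (r * (σ ^ N) r') := by
  simp only [twistedMonomial_apply, mul_assoc, ← shiftMatrix_mul]
  rw [← mul_assoc (shiftMatrix m N), shiftMatrix_mul_twistedDiagonal hσ, map_mul]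
  simp only [mul_assoc]

variable (k m)

/-- The coefficient of `t^N`: the entry `(0, N)` of `r t^N` is `r X^(N / m)`. -/
noncomputable def twistedCoeff (N : ℕ) : Matrix (Fin m) (Fin m) (Polynomial R) →ₗ[k] R :=
  ((Polynomial.lcoeff R (N / m)).restrictScalars k) ∘ₗ Matrix.entryLinearMap k _ 0 (N : Fin m)

theorem twistedCoeff_twistedMonomial (N M : ℕ) (r : R) :
    twistedCoeff k m N (twistedMonomial m σ M r) = if N = M then r else 0 := by
  have hcoeff : twistedCoeff k m N (twistedMonomial m σ M r) =
      if (M : Fin m) = N ∧ N / m = M / m then r else 0 := by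
    simp only [twistedCoeff, twistedMonomial_apply, twistedDiagonal_apply, Matrix.diagonal_mul,
      shiftMatrix_apply, LinearMap.coe_comp, Function.comp_apply, Matrix.entryLinearMap_apply,
      LinearMap.coe_restrictScalars, Polynomial.lcoeff_apply, zero_add, Fin.val_zero,
      pow_zero, AlgEquiv.one_apply, mul_ite, mul_zero, ite_and]
    split_ifs <;> simp_all [eq_comm]
  have hiff : (M : Fin m) = N ∧ N / m = M / m ↔ N = M := by
    refine ⟨fun ⟨hmod, hdiv⟩ => ?_, fun h => by rw [h]; exact ⟨rfl, rfl⟩⟩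
    rw [Fin.ext_iff, Fin.val_natCast, Fin.val_natCast] at hmod
    rw [← Nat.div_add_mod N m, ← Nat.div_add_mod M m, hmod, hdiv]
  simp only [hcoeff, hiff]

end CyclicMatrix

section NoZeroDivisors

variable (k D ι : Type*) [CommSemiring k] [Semiring D] [Algebra k D]

noncomputable def tensorMvPolynomialToAddMonoidAlgebra :
    D ⊗[k] MvPolynomial ι k →ₐ[k] AddMonoidAlgebra D (ι →₀ ℕ) :=
  Algebra.TensorProduct.lift AddMonoidAlgebra.singleZeroAlgHom
    (AddMonoidAlgebra.mapAlgHom (ι →₀ ℕ) (Algebra.ofId k D)) fun d p => by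
      rw [commute_iff_eq]
      ext μ
      simp [AddMonoidAlgebra.coeff_single_zero_mul, AddMonoidAlgebra.coeff_mul_single_zero,
        Algebra.commutes]

theorem tensorMvPolynomialToAddMonoidAlgebra_injective :
    Function.Injective (tensorMvPolynomialToAddMonoidAlgebra k D ι) := by
  classical
  let e := TensorProduct.congr (LinearEquiv.refl k D) (AddMonoidAlgebra.coeffLinearEquiv k)
    ≪≫ₗ TensorProduct.finsuppScalarRight k k D (ι →₀ ℕ)
  have hcoeff : ∀ x, (tensorMvPolynomialToAddMonoidAlgebra k D ι x).coeff = e x := by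
    intro x
    induction x using TensorProduct.induction_on with
    | zero => simp
    | tmul d p =>
      induction p using MvPolynomial.induction_on' with
      | monomial μ c =>
        ext ν
        rw [tensorMvPolynomialToAddMonoidAlgebra, Algebra.TensorProduct.lift_tmul,
          ← MvPolynomial.single_eq_monomial]
        simp [e, TensorProduct.finsuppScalarRight_apply_tmul, Algebra.smul_def,
          Algebra.commutes]
      | add p q hp hq => simp_all [TensorProduct.tmul_add]
    | add x y hx hy => simp_all
  intro x y h
  exact e.injective (by rw [← hcoeff, ← hcoeff, h])

instance [NoZeroDivisors D] : NoZeroDivisors (D ⊗[k] MvPolynomial ι k) :=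
  (tensorMvPolynomialToAddMonoidAlgebra_injective k D ι).noZeroDivisors _ (map_zero _) (map_mul _)

end NoZeroDivisors

section CyclicRename

variable {k : Type*} [CommSemiring k] (ι : Type*) (m : ℕ) [NeZero m]

noncomputable def cyclicRename :
    MvPolynomial (ι × Fin m) k ≃ₐ[k] MvPolynomial (ι × Fin m) k :=
  MvPolynomial.renameEquiv k ((Equiv.refl ι).prodCongr (Equiv.addRight 1))

variable {ι m}

theorem cyclicRename_pow_X (N : ℕ) (i : ι) (j : Fin m) :
    (cyclicRename (k := k) ι m ^ N) (MvPolynomial.X (i, j)) = MvPolynomial.X (i, j + N) := by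
  induction N with
  | zero => simp
  | succ N ih =>
    rw [pow_succ', AlgEquiv.mul_apply, ih, Nat.cast_succ, ← add_assoc]
    simp [cyclicRename]

variable (ι m)

theorem cyclicRename_pow_self : cyclicRename (k := k) ι m ^ m = 1 := by
  refine AlgEquiv.coe_toAlgHom_injective (MvPolynomial.algHom_ext fun ⟨i, j⟩ => ?_)
  simp [cyclicRename_pow_X]

end CyclicRename

theorem lTensor_mul_lTensor_of_twisted {k D R A : Type*} [CommSemiring k] [Semiring D]
    [Algebra k D] [Semiring R] [Algebra k R] [Semiring A] [Algebra k A]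
    {W : ℕ → R →ₗ[k] A} {σ : ℕ → R ≃ₐ[k] R}
    (hW : ∀ N M r r', W N r * W M r' = W (N + M) (r * σ N r')) (N M : ℕ) (b b' : D ⊗[k] R) :
    (W N).lTensor D b * (W M).lTensor D b' =
      (W (N + M)).lTensor D
        (b * Algebra.TensorProduct.congr (AlgEquiv.refl : D ≃ₐ[k] D) (σ N) b') := by
  induction b using TensorProduct.induction_on with
  | zero => simp
  | add x y hx hy => simp only [map_add, add_mul, hx, hy]
  | tmul d r =>
    induction b' using TensorProduct.induction_on with
    | zero => simp
    | add x y hx hy => simp only [map_add, mul_add, hx, hy]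
    | tmul e r' => simp [hW]

section TwistedSpan

variable {k R : Type*} [CommSemiring k] [CommSemiring R] [Algebra k R] (D : Type*) [Semiring D]
  [Algebra k D] (m : ℕ) [NeZero m] (σ : R ≃ₐ[k] R)

/-- `(D ⊗ R)[t; σ]`, as the sums of the `b t^N` inside `D ⊗ Mat_m(R[X])`. -/
noncomputable def twistedSpan : AddSubmonoid (D ⊗[k] Matrix (Fin m) (Fin m) (Polynomial R)) :=
  AddMonoidHom.mrange
    (Finsupp.liftAddHom fun N => ((twistedMonomial m σ N).lTensor D).toAddMonoidHom)

variable {D m σ}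

theorem lTensor_twistedMonomial_mem_twistedSpan (N : ℕ) (b : D ⊗[k] R) :
    (twistedMonomial m σ N).lTensor D b ∈ twistedSpan D m σ :=
  ⟨Finsupp.single N b, Finsupp.liftAddHom_apply_single _ _ _⟩

theorem lTensor_twistedMonomial_mul (hσ : σ ^ m = 1) (N M : ℕ) (b b' : D ⊗[k] R) :
    (twistedMonomial m σ N).lTensor D b * (twistedMonomial m σ M).lTensor D b' =
      (twistedMonomial m σ (N + M)).lTensor D
        (b * Algebra.TensorProduct.congr (AlgEquiv.refl : D ≃ₐ[k] D) (σ ^ N) b') :=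
  lTensor_mul_lTensor_of_twisted (W := twistedMonomial m σ) (σ := (σ ^ ·))
    (twistedMonomial_mul hσ) N M b b'

theorem lTensor_twistedCoeff_lTensor_twistedMonomial (N M : ℕ) (b : D ⊗[k] R) :
    (twistedCoeff k m N).lTensor D ((twistedMonomial m σ M).lTensor D b) =
      if N = M then b else 0 := by
  rw [← LinearMap.comp_apply, ← LinearMap.lTensor_comp]
  split_ifs with h
  · rw [show twistedCoeff k m N ∘ₗ twistedMonomial m σ M = LinearMap.id from
      LinearMap.ext fun r => by simp [twistedCoeff_twistedMonomial, h]]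
    simp
  · rw [show twistedCoeff k m N ∘ₗ twistedMonomial m σ M = 0 from
      LinearMap.ext fun r => by simp [twistedCoeff_twistedMonomial, h]]
    simp

theorem mul_mem_twistedSpan (hσ : σ ^ m = 1)
    {x y : D ⊗[k] Matrix (Fin m) (Fin m) (Polynomial R)}
    (hx : x ∈ twistedSpan D m σ) (hy : y ∈ twistedSpan D m σ) :
    x * y ∈ twistedSpan D m σ :=
  TwistedGrading.mul_mem_mrange_liftAddHom
    (fun N => ((twistedMonomial m σ N).lTensor D).toAddMonoidHom)
    (fun N => Algebra.TensorProduct.congr (AlgEquiv.refl : D ≃ₐ[k] D) (σ ^ N))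
    (lTensor_twistedMonomial_mul hσ) hx hy

theorem mul_ne_zero_of_mem_twistedSpan [NoZeroDivisors (D ⊗[k] R)] (hσ : σ ^ m = 1)
    {x y : D ⊗[k] Matrix (Fin m) (Fin m) (Polynomial R)}
    (hx : x ∈ twistedSpan D m σ) (hy : y ∈ twistedSpan D m σ) (hx0 : x ≠ 0)
    (hy0 : y ≠ 0) :
    x * y ≠ 0 := by
  obtain ⟨f, rfl⟩ := hx
  obtain ⟨g, rfl⟩ := hy
  refine TwistedGrading.liftAddHom_mul_ne_zero
    (fun N => ((twistedMonomial m σ N).lTensor D).toAddMonoidHom)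
    (fun N => Algebra.TensorProduct.congr (AlgEquiv.refl : D ≃ₐ[k] D) (σ ^ N))
    (lTensor_twistedMonomial_mul hσ)
    (fun N => ((twistedCoeff k m N).lTensor D).toAddMonoidHom)
    lTensor_twistedCoeff_lTensor_twistedMonomial
    (fun N b hb => (map_ne_zero_iff _ (AlgEquiv.injective _)).2 hb) ?_ ?_
  · rintro rfl
    exact hx0 (map_zero _)
  · rintro rfl
    exact hy0 (map_zero _)

end TwistedSpan

section GenericMatrices

variable (k : Type*) [CommSemiring k] (g m : ℕ) [NeZero m]

/-- The image `∑ₙ x_{(i,n),0} tⁿ` of the generic matrix `z_i`. -/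
noncomputable def twistedGenericMatrix (i : Fin g) :
    Matrix (Fin m) (Fin m) (Polynomial (MvPolynomial ((Fin g × Fin m) × Fin m) k)) :=
  ∑ n : Fin m, twistedMonomial m (cyclicRename (k := k) (Fin g × Fin m) m) n
    (MvPolynomial.X ((i, n), (0 : Fin m)))

theorem twistedGenericMatrix_apply (i : Fin g) (α β : Fin m) :
    twistedGenericMatrix k g m i α β =
      Polynomial.C (MvPolynomial.X ((i, β - α), α)) *
        Polynomial.X ^ (((α : ℕ) + ((β - α : Fin m) : ℕ)) / m) := by
  rw [twistedGenericMatrix, Matrix.sum_apply, Finset.sum_eq_single (β - α)]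
  · rw [twistedMonomial_apply, twistedDiagonal_apply, Matrix.diagonal_mul, shiftMatrix_apply,
      Fin.cast_val_eq_self, if_pos (by ring), cyclicRename_pow_X, Fin.cast_val_eq_self, zero_add]
  · intro n _ hn
    rw [twistedMonomial_apply, twistedDiagonal_apply, Matrix.diagonal_mul, shiftMatrix_apply,
      Fin.cast_val_eq_self, if_neg (fun h => hn (by rw [← h]; ring)), mul_zero]
  · exact fun h => absurd (Finset.mem_univ _) h

theorem aeval_twistedGenericMatrix_injective :
    Function.Injective (MvPolynomial.aeval (R := k)
      fun v : Fin g × Fin m × Fin m => twistedGenericMatrix k g m v.1 v.2.1 v.2.2) := by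
  let e : Fin g × Fin m × Fin m → (Fin g × Fin m) × Fin m :=
    fun v => ((v.1, v.2.2 - v.2.1), v.2.1)
  have he : Function.Injective e := by
    rintro ⟨i, α, β⟩ ⟨i', α', β'⟩ h
    simp only [e, Prod.mk.injEq] at h
    obtain ⟨⟨rfl, h⟩, rfl⟩ := h
    simp [sub_left_inj.1 h]
  have hcomp : ((Polynomial.aeval (1 : MvPolynomial ((Fin g × Fin m) × Fin m) k)).restrictScalars
      k).comp (MvPolynomial.aeval fun v : Fin g × Fin m × Fin m =>
        twistedGenericMatrix k g m v.1 v.2.1 v.2.2) = MvPolynomial.rename e :=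
    MvPolynomial.algHom_ext fun v => by simp [twistedGenericMatrix_apply, e]
  intro p q hpq
  apply MvPolynomial.rename_injective e he
  rw [← hcomp, AlgHom.comp_apply, AlgHom.comp_apply, hpq]

noncomputable def genericMatrixEmbedding :
    Matrix (Fin m) (Fin m) (MvPolynomial (Fin g × Fin m × Fin m) k) →ₐ[k]
      Matrix (Fin m) (Fin m) (Polynomial (MvPolynomial ((Fin g × Fin m) × Fin m) k)) :=
  (MvPolynomial.aeval fun v : Fin g × Fin m × Fin m =>
    twistedGenericMatrix k g m v.1 v.2.1 v.2.2).mapMatrix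

theorem genericMatrixEmbedding_injective : Function.Injective (genericMatrixEmbedding k g m) :=
  Matrix.map_injective (aeval_twistedGenericMatrix_injective k g m)

end GenericMatrices

section GenericMatrixAlgebra

variable (k : Type*) [Field k] (g m : ℕ) [NeZero m]

theorem genericMatrixEmbedding_genericMatrix (i : Fin g) :
    genericMatrixEmbedding k g m (genericMatrix k g m i) = twistedGenericMatrix k g m i := by
  ext α β : 1
  simp [genericMatrixEmbedding, genericMatrix]

variable (D : Type*) [Semiring D] [Algebra k D]

theorem tmul_genericMatrixEmbedding_mem_twistedSpan {a} (ha : a ∈ genericMatrixAlgebra k g m)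
    (d : D) :
    d ⊗ₜ[k] genericMatrixEmbedding k g m a ∈
      twistedSpan D m (cyclicRename (Fin g × Fin m) m) := by
  induction ha using Algebra.adjoin_induction generalizing d with
  | mem x hx =>
    obtain ⟨i, rfl⟩ := hx
    rw [genericMatrixEmbedding_genericMatrix, twistedGenericMatrix, TensorProduct.tmul_sum]
    refine AddSubmonoid.sum_mem _ fun n _ => ?_
    rw [← LinearMap.lTensor_tmul]
    exact lTensor_twistedMonomial_mem_twistedSpan n _
  | algebraMap c =>
    rw [AlgHom.commutes, Algebra.algebraMap_eq_smul_one, ← TensorProduct.smul_tmul,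
      ← twistedMonomial_zero_one m (cyclicRename (Fin g × Fin m) m), ← LinearMap.lTensor_tmul]
    exact lTensor_twistedMonomial_mem_twistedSpan 0 _
  | add x y _ _ hx hy =>
    rw [map_add, TensorProduct.tmul_add]
    exact add_mem (hx d) (hy d)
  | mul x y _ _ hx hy =>
    rw [map_mul, ← mul_one d, ← Algebra.TensorProduct.tmul_mul_tmul]
    exact mul_mem_twistedSpan (cyclicRename_pow_self _ m) (hx d) (hy 1)

theorem map_genericMatrixEmbedding_mem_twistedSpan (u : D ⊗[k] genericMatrixAlgebra k g m) :
    Algebra.TensorProduct.map (AlgHom.id k D)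
        ((genericMatrixEmbedding k g m).comp (genericMatrixAlgebra k g m).val) u ∈
      twistedSpan D m (cyclicRename (Fin g × Fin m) m) := by
  induction u using TensorProduct.induction_on with
  | zero => rw [map_zero]; exact zero_mem _
  | tmul d a => exact tmul_genericMatrixEmbedding_mem_twistedSpan k g m D a.2 d
  | add x y hx hy => rw [map_add]; exact add_mem hx hy

end GenericMatrixAlgebra

theorem tensor_generic_matrices_is_domain_general {k : Type*} [Field k]
    (D : Type*) [DivisionRing D] [Algebra k D] (g m : ℕ) (hm : 0 < m) :
    Nontrivial (D ⊗[k] (genericMatrixAlgebra k g m)) ∧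
    ∀ u v : D ⊗[k] (genericMatrixAlgebra k g m), u * v = 0 → u = 0 ∨ v = 0 := by
  have : NeZero m := ⟨hm.ne'⟩
  set Θ := Algebra.TensorProduct.map (AlgHom.id k D)
    ((genericMatrixEmbedding k g m).comp (genericMatrixAlgebra k g m).val)
  have hΘ : Function.Injective Θ :=
    Module.Flat.lTensor_preserves_injective_linearMap (M := D) _
      ((genericMatrixEmbedding_injective k g m).comp Subtype.val_injective)
  refine ⟨Algebra.TensorProduct.nontrivial_of_algebraMap_injective_of_flat_left k D _
    (algebraMap k (genericMatrixAlgebra k g m)).injective, fun u v huv => ?_⟩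
  by_contra! h
  refine mul_ne_zero_of_mem_twistedSpan (cyclicRename_pow_self _ m)
    (map_genericMatrixEmbedding_mem_twistedSpan k g m D u)
    (map_genericMatrixEmbedding_mem_twistedSpan k g m D v)
    ((map_ne_zero_iff Θ hΘ).2 h.1) ((map_ne_zero_iff Θ hΘ).2 h.2) ?_
  rw [← map_mul, huv, map_zero]

/-- part of Proposition 4.4. For a division ring `D` that is a
`k`-algebra, `D ⊗_k GM_m(z)` is a domain. -/
theorem tensor_generic_matrices_is_domain {k : Type*} [Field k] [CharZero k]
    (D : Type*) [DivisionRing D] [Algebra k D] (g m : ℕ) (hm : 0 < m) :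
    Nontrivial (D ⊗[k] (genericMatrixAlgebra k g m)) ∧
    ∀ u v : D ⊗[k] (genericMatrixAlgebra k g m), u * v = 0 → u = 0 ∨ v = 0 :=
  tensor_generic_matrices_is_domain_general D g m hm
end

section
/- Let k be a field of characteristic 0 and g ∈ ℕ. Let B be the bi-free algebra: the quotient of the free k-algebra on the 2g variables X_1,…,X_g, Y_1,…,Y_g by the two-sided ideal generated by the commutators X_i·Y_j − Y_j·X_i for all i ≠ j. Let A be the multipartite free k-algebra with g+2 parts: A = k⟨X'_1,…,X'_g⟩ ⊗_k k⟨X''_1, Y''_1⟩ ⊗_k ⋯ ⊗_k k⟨X''_g, Y''_g⟩ ⊗_k k⟨Y'_1,…,Y'_g⟩ (tensor product over k of free k-algebras). Then the assignment X_i ↦ X'_i·X''_i, Y_i ↦ Y'_i·Y''_i (products of the canonical images in A) induces a well-defined k-algebra homomorphism ϑ : B → A, and ϑ is injective. -/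
/-- Variables of the bi-free algebra: `Sum.inl i = X_i`, `Sum.inr i = Y_i`. -/
abbrev BFVar (g : ℕ) := Fin g ⊕ Fin g

/-- The defining relations of the bi-free algebra: `X_i Y_j = Y_j X_i` for `i ≠ j`. -/
inductive BFRel (k : Type*) [Field k] (g : ℕ) :
    FreeAlgebra k (BFVar g) → FreeAlgebra k (BFVar g) → Prop
  | comm (i j : Fin g) (h : i ≠ j) :
      BFRel k g (FreeAlgebra.ι k (Sum.inl i) * FreeAlgebra.ι k (Sum.inr j))
        (FreeAlgebra.ι k (Sum.inr j) * FreeAlgebra.ι k (Sum.inl i))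

/-- The bi-free algebra on `2g` variables. -/
abbrev BiFreeAlgebra (k : Type*) [Field k] (g : ℕ) := RingQuot (BFRel k g)

/-- Variables of the multipartite free algebra with `g + 2` parts:
`X'_1,…,X'_g` (first part), pairs `X''_i, Y''_i` (the `g` middle parts, `Bool` selecting
`X''` = `false` or `Y''` = `true`) and `Y'_1,…,Y'_g` (last part). -/
abbrev MPVar (g : ℕ) := Fin g ⊕ ((Fin g × Bool) ⊕ Fin g)

/-- The part (tensor factor) containing a given variable: the first part, one of the `g`
middle parts, or the last part. -/
def mpPart {g : ℕ} : MPVar g → Unit ⊕ (Fin g ⊕ Unit)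
  | .inl _ => .inl ()
  | .inr (.inl (i, _)) => .inr (.inl i)
  | .inr (.inr _) => .inr (.inr ())

/-- The defining relations of the multipartite free algebra with `g + 2` parts:
variables lying in distinct parts commute. -/
inductive MPRel (k : Type*) [Field k] (g : ℕ) :
    FreeAlgebra k (MPVar g) → FreeAlgebra k (MPVar g) → Prop
  | comm (v w : MPVar g) (h : mpPart v ≠ mpPart w) :
      MPRel k g (FreeAlgebra.ι k v * FreeAlgebra.ι k w)
        (FreeAlgebra.ι k w * FreeAlgebra.ι k v)

/-- The multipartite free algebra
`k⟨X'⟩ ⊗ k⟨X''_1,Y''_1⟩ ⊗ ⋯ ⊗ k⟨X''_g,Y''_g⟩ ⊗ k⟨Y'⟩` with `g + 2` parts. -/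
abbrev MPAlgebra (k : Type*) [Field k] (g : ℕ) := RingQuot (MPRel k g)

/-- Canonical generator of the bi-free algebra. -/
noncomputable def bfGen (k : Type*) [Field k] (g : ℕ) (v : BFVar g) : BiFreeAlgebra k g :=
  RingQuot.mkAlgHom k (BFRel k g) (FreeAlgebra.ι k v)

/-- Canonical generator of the multipartite free algebra. -/
noncomputable def mpGen (k : Type*) [Field k] (g : ℕ) (w : MPVar g) : MPAlgebra k g :=
  RingQuot.mkAlgHom k (MPRel k g) (FreeAlgebra.ι k w)

/-!
A word in the letters `X_i`, `Y_i` has a *shape*: the sequence of indices of its `X`-letters,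
that of its `Y`-letters, and for each index `i` the sequence of its letters `X_i`, `Y_i`. These
are exactly the images of the word in the parts `k⟨X'⟩`, `k⟨Y'⟩` and `k⟨X''_i, Y''_i⟩` of `A`,
so taking shapes factors through `ϑ` and it suffices to show that `B → k[shapes]` is injective.
This holds because two words with the same shape are equal in `B`: the first letter `a` of one
word occurs in the other one preceded only by letters that commute with `a` (a letter of the same
kind, or with the same index, would already be visible at the head of one of the projections), so
it can be brought to the front. Choosing one word for each shape then gives a linear retraction
`k[shapes] → B`.
-/

theorem Submonoid.commute_map_of_mem_closure {M N : Type*} [Monoid M] [Monoid N] (f : M →* N)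
    {x : N} {S : Set M} (hS : ∀ s ∈ S, Commute x (f s)) {u : M} (hu : u ∈ Submonoid.closure S) :
    Commute x (f u) := by
  induction hu using Submonoid.closure_induction with
  | mem s hs => exact hS s hs
  | one => simp
  | mul a b _ _ ha hb => simpa using ha.mul_right hb

theorem FreeMonoid.of_mul_ne_one {α : Type*} (a : α) (w : FreeMonoid α) : of a * w ≠ 1 :=
  fun h => List.cons_ne_nil a _ (congrArg toList h)

theorem FreeMonoid.eq_of_of_mul_eq_of_mul {α : Type*} {a b : α} {v w : FreeMonoid α}
    (h : of a * v = of b * w) : a = b :=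
  List.head_eq_of_cons_eq (congrArg toList h)

theorem FreeAlgebra.basisFreeMonoid_apply (R X : Type*) [CommSemiring R] (w : FreeMonoid X) :
    basisFreeMonoid R X w = FreeMonoid.lift (ι R) w := by
  simp [basisFreeMonoid, equivMonoidAlgebraFreeMonoid]

/-- The first component records, for `false` (the `X`'s) and `true` (the `Y`'s), the indices of
the letters of that kind; the second records, for each index, the kinds of the letters with that
index. -/
abbrev Shape (g : ℕ) := (Bool → FreeMonoid (Fin g)) × (Fin g → FreeMonoid Bool)

namespace BFVar

variable {g : ℕ}

/-- `false` for `X_i`, `true` for `Y_i`. -/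
def kind : BFVar g → Bool := Sum.isRight

def idx : BFVar g → Fin g := Sum.elim id id

theorem ext {a b : BFVar g} (hk : kind a = kind b) (hi : idx a = idx b) : a = b := by
  cases a <;> cases b <;> simp_all [kind, idx]

def Indep (a b : BFVar g) : Prop := kind a ≠ kind b ∧ idx a ≠ idx b

theorem indep_inl_inr {i j : Fin g} (h : i ≠ j) : Indep (.inl i) (.inr j) :=
  ⟨Bool.false_ne_true, h⟩

def shape (a : BFVar g) : Shape g :=
  (Pi.mulSingle (kind a) (.of (idx a)), Pi.mulSingle (idx a) (.of (kind a)))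

theorem shape_commute {a b : BFVar g} (h : Indep a b) : Commute (shape a) (shape b) :=
  .prod (Pi.mulSingle_commute h.1 _ _) (Pi.mulSingle_commute h.2 _ _)

def wordShape : FreeMonoid (BFVar g) →* Shape g := FreeMonoid.lift shape

theorem wordShape_of_mul (a : BFVar g) (w : FreeMonoid (BFVar g)) :
    wordShape (.of a * w) = shape a * wordShape w := by
  rw [map_mul, wordShape, FreeMonoid.lift_eval_of]

theorem eq_one_of_wordShape_eq_one {w : FreeMonoid (BFVar g)} (h : wordShape w = 1) : w = 1 := by
  cases w with
  | one => rfl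
  | of_mul a w =>
    have h' := congrArg (fun s => s.1 (kind a)) h
    simp only [wordShape_of_mul, shape, Prod.fst_mul, Pi.mul_apply, Pi.mulSingle_eq_same] at h'
    exact absurd h' (FreeMonoid.of_mul_ne_one _ _)

def indepWords (a : BFVar g) : Submonoid (FreeMonoid (BFVar g)) :=
  Submonoid.closure (FreeMonoid.of '' {b | Indep a b})

theorem map_mul_of_mul_mul_of_mem_indepWords {M : Type*} [Monoid M]
    (f : FreeMonoid (BFVar g) →* M) {a : BFVar g}
    (hf : ∀ b, Indep a b → Commute (f (.of a)) (f (.of b)))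
    {u : FreeMonoid (BFVar g)} (hu : u ∈ indepWords a) (r : FreeMonoid (BFVar g)) :
    f (u * .of a * r) = f (.of a) * f (u * r) := by
  have hcomm := Submonoid.commute_map_of_mem_closure f (by rintro _ ⟨b, hb, rfl⟩; exact hf b hb) hu
  rw [map_mul, map_mul, map_mul, ← hcomm.eq, mul_assoc]

theorem exists_indepWords_mul_of_mul (a : BFVar g) (w : FreeMonoid (BFVar g))
    {x : FreeMonoid (Fin g)} {y : FreeMonoid Bool}
    (hk : (wordShape w).1 (kind a) = .of (idx a) * x)
    (hi : (wordShape w).2 (idx a) = .of (kind a) * y) :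
    ∃ u ∈ indepWords a, ∃ r, w = u * .of a * r := by
  induction w using FreeMonoid.inductionOn' generalizing x y with
  | one => exact absurd hk.symm (FreeMonoid.of_mul_ne_one _ _)
  | of_mul b w ih =>
    simp only [wordShape_of_mul, shape, Prod.fst_mul, Prod.snd_mul, Pi.mul_apply] at hk hi
    by_cases hkb : kind b = kind a
    · rw [hkb, Pi.mulSingle_eq_same] at hk
      obtain rfl : b = a := ext hkb (FreeMonoid.eq_of_of_mul_eq_of_mul hk)
      exact ⟨1, one_mem _, w, by rw [one_mul]⟩
    by_cases hib : idx b = idx a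
    · rw [hib, Pi.mulSingle_eq_same] at hi
      exact absurd (FreeMonoid.eq_of_of_mul_eq_of_mul hi) hkb
    rw [Pi.mulSingle_eq_of_ne (Ne.symm hkb), one_mul] at hk
    rw [Pi.mulSingle_eq_of_ne (Ne.symm hib), one_mul] at hi
    obtain ⟨u, hu, r, rfl⟩ := ih hk hi
    exact ⟨.of b * u, mul_mem (Submonoid.subset_closure ⟨b, ⟨Ne.symm hkb, Ne.symm hib⟩, rfl⟩) hu,
      r, by simp only [mul_assoc]⟩

end BFVar

namespace MPVar

variable {g : ℕ}

def shape : MPVar g → Shape g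
  | .inl i => (Pi.mulSingle false (.of i), 1)
  | .inr (.inl (i, b)) => (1, Pi.mulSingle i (.of b))
  | .inr (.inr i) => (Pi.mulSingle true (.of i), 1)

theorem shape_commute {v w : MPVar g} (h : mpPart v ≠ mpPart w) :
    Commute (shape v) (shape w) := by
  rcases v with i | ⟨i, b⟩ | i <;> rcases w with j | ⟨j, c⟩ | j <;>
    simp only [mpPart, ne_eq, not_true_eq_false, reduceCtorEq, not_false_eq_true,
      Sum.inr.injEq, Sum.inl.injEq] at h <;>
    refine .prod ?_ ?_ <;> simp only [shape, Commute.one_left, Commute.one_right]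
  all_goals exact Pi.mulSingle_commute (by first | exact h | decide) _ _

theorem shape_mul_shape_inl (i : Fin g) :
    shape (.inl i) * shape (.inr (.inl (i, false))) = BFVar.shape (.inl i) :=
  Prod.ext (mul_one _) (one_mul _)

theorem shape_mul_shape_inr (i : Fin g) :
    shape (.inr (.inr i)) * shape (.inr (.inl (i, true))) = BFVar.shape (.inr i) :=
  Prod.ext (mul_one _) (one_mul _)

end MPVar

namespace MPAlgebra

variable {g : ℕ} {k : Type*} [Field k]

theorem gen_commute {v w : MPVar g} (h : mpPart v ≠ mpPart w) :
    Commute (mpGen k g v) (mpGen k g w) := by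
  have rel := RingQuot.mkAlgHom_rel k (MPRel.comm (k := k) v w h)
  rwa [map_mul, map_mul] at rel

noncomputable def shapeAlgHom (k : Type*) [Field k] (g : ℕ) :
    MPAlgebra k g →ₐ[k] MonoidAlgebra k (Shape g) :=
  RingQuot.liftAlgHom k ⟨FreeAlgebra.lift k fun v => MonoidAlgebra.of k _ (MPVar.shape v), by
    rintro _ _ ⟨v, w, h⟩
    simp only [map_mul, FreeAlgebra.lift_ι_apply]
    exact ((MPVar.shape_commute h).map (MonoidAlgebra.of k _)).eq⟩

theorem shapeAlgHom_mpGen (v : MPVar g) :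
    shapeAlgHom k g (mpGen k g v) = MonoidAlgebra.of k _ (MPVar.shape v) := by
  rw [shapeAlgHom, mpGen, RingQuot.liftAlgHom_mkAlgHom_apply, FreeAlgebra.lift_ι_apply]

end MPAlgebra

namespace BiFreeAlgebra

open BFVar

variable {g : ℕ} {k : Type*} [Field k]

theorem gen_commute {a b : BFVar g} (h : Indep a b) : Commute (bfGen k g a) (bfGen k g b) := by
  have rel {i j : Fin g} (hij : i ≠ j) : Commute (bfGen k g (.inl i)) (bfGen k g (.inr j)) := by
    have h := RingQuot.mkAlgHom_rel k (BFRel.comm (k := k) i j hij)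
    rwa [map_mul, map_mul] at h
  obtain ⟨hk, hi⟩ := h
  rcases a with i | i <;> rcases b with j | j <;> simp only [kind, idx] at hk hi
  · simp at hk
  · exact rel (by simpa using hi)
  · exact (rel (by simpa using Ne.symm hi)).symm
  · simp at hk

noncomputable def word (k : Type*) [Field k] (g : ℕ) : FreeMonoid (BFVar g) →* BiFreeAlgebra k g :=
  FreeMonoid.lift (bfGen k g)

theorem word_eq_of_wordShape_eq {w₁ w₂ : FreeMonoid (BFVar g)}
    (h : wordShape w₁ = wordShape w₂) : word k g w₁ = word k g w₂ := by
  induction w₁ using FreeMonoid.inductionOn' generalizing w₂ with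
  | one => rw [eq_one_of_wordShape_eq_one h.symm]
  | of_mul a t ih =>
    rw [wordShape_of_mul] at h
    obtain ⟨u, hu, r, rfl⟩ := exists_indepWords_mul_of_mul a w₂
      (x := (wordShape t).1 (kind a)) (y := (wordShape t).2 (idx a))
      (by simp [← h, shape]) (by simp [← h, shape])
    have hrest : wordShape (u * r) = wordShape t := by
      have hs := map_mul_of_mul_mul_of_mem_indepWords wordShape
        (fun b hb => by simpa only [wordShape, FreeMonoid.lift_eval_of] using shape_commute hb) hu r
      exact (mul_left_cancel (h.trans hs)).symm
    have hw := map_mul_of_mul_mul_of_mem_indepWords (word k g)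
      (fun b hb => by simpa only [word, FreeMonoid.lift_eval_of] using gen_commute hb) hu r
    rw [hw, ← ih hrest.symm, map_mul]

noncomputable def shapeAlgHom (k : Type*) [Field k] (g : ℕ) :
    BiFreeAlgebra k g →ₐ[k] MonoidAlgebra k (Shape g) :=
  RingQuot.liftAlgHom k ⟨FreeAlgebra.lift k fun a => MonoidAlgebra.of k _ (shape a), by
    rintro _ _ ⟨i, j, h⟩
    simp only [map_mul, FreeAlgebra.lift_ι_apply]
    exact ((shape_commute (indep_inl_inr h)).map (MonoidAlgebra.of k _)).eq⟩

theorem shapeAlgHom_bfGen (a : BFVar g) :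
    shapeAlgHom k g (bfGen k g a) = MonoidAlgebra.of k _ (shape a) := by
  rw [shapeAlgHom, bfGen, RingQuot.liftAlgHom_mkAlgHom_apply, FreeAlgebra.lift_ι_apply]

theorem shapeAlgHom_word (w : FreeMonoid (BFVar g)) :
    shapeAlgHom k g (word k g w) = MonoidAlgebra.of k _ (wordShape w) := by
  have : (shapeAlgHom k g : _ →* _).comp (word k g) = (MonoidAlgebra.of k _).comp wordShape :=
    FreeMonoid.hom_eq fun a => by simp [word, wordShape, shapeAlgHom_bfGen]
  exact DFunLike.congr_fun this w

theorem mkAlgHom_lift_ι (w : FreeMonoid (BFVar g)) :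
    RingQuot.mkAlgHom k (BFRel k g) (FreeMonoid.lift (FreeAlgebra.ι k) w) = word k g w := by
  have : (RingQuot.mkAlgHom k (BFRel k g) : _ →* _).comp (FreeMonoid.lift (FreeAlgebra.ι k)) =
      word k g :=
    FreeMonoid.hom_eq fun a => by simp [word, bfGen]
  exact DFunLike.congr_fun this w

theorem shapeAlgHom_injective : Function.Injective (shapeAlgHom k g) := by
  let retraction : MonoidAlgebra k (Shape g) →ₗ[k] BiFreeAlgebra k g :=
    (MonoidAlgebra.basis (Shape g) k).constr k fun p => word k g (Function.invFun wordShape p)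
  let mk := (RingQuot.mkAlgHom k (BFRel k g)).toLinearMap
  have hmk : retraction ∘ₗ (shapeAlgHom k g).toLinearMap ∘ₗ mk = mk :=
    (FreeAlgebra.basisFreeMonoid k _).ext fun w => by
      have hw : wordShape (Function.invFun wordShape (wordShape w)) = wordShape w :=
        Function.invFun_eq ⟨w, rfl⟩
      simp only [mk, retraction, LinearMap.comp_apply, AlgHom.toLinearMap_apply,
        FreeAlgebra.basisFreeMonoid_apply, mkAlgHom_lift_ι, shapeAlgHom_word,
        MonoidAlgebra.of_apply, ← MonoidAlgebra.basis_apply, Module.Basis.constr_basis]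
      exact word_eq_of_wordShape_eq hw
  refine Function.LeftInverse.injective (g := retraction) fun x => ?_
  obtain ⟨y, rfl⟩ := RingQuot.mkAlgHom_surjective k _ x
  exact LinearMap.congr_fun hmk y

noncomputable def toMPAlgebra (k : Type*) [Field k] (g : ℕ) :
    BiFreeAlgebra k g →ₐ[k] MPAlgebra k g :=
  RingQuot.liftAlgHom k ⟨FreeAlgebra.lift k <| Sum.elim
    (fun i => mpGen k g (.inl i) * mpGen k g (.inr (.inl (i, false))))
    (fun i => mpGen k g (.inr (.inr i)) * mpGen k g (.inr (.inl (i, true)))), by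
    rintro _ _ ⟨i, j, h⟩
    simp only [map_mul, FreeAlgebra.lift_ι_apply, Sum.elim_inl, Sum.elim_inr]
    have hX'Y' := MPAlgebra.gen_commute (k := k) (v := .inl i) (w := .inr (.inr j))
      (by simp [mpPart])
    have hX'Y'' := MPAlgebra.gen_commute (k := k) (v := .inl i) (w := .inr (.inl (j, true)))
      (by simp [mpPart])
    have hX''Y' := MPAlgebra.gen_commute (k := k) (v := .inr (.inl (i, false)))
      (w := .inr (.inr j)) (by simp [mpPart])
    have hX''Y'' := MPAlgebra.gen_commute (k := k) (v := .inr (.inl (i, false)))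
      (w := .inr (.inl (j, true))) (by simp [mpPart, h])
    exact ((hX'Y'.mul_right hX'Y'').mul_left (hX''Y'.mul_right hX''Y'')).eq⟩

theorem toMPAlgebra_inl (i : Fin g) :
    toMPAlgebra k g (bfGen k g (.inl i)) =
      mpGen k g (.inl i) * mpGen k g (.inr (.inl (i, false))) := by
  rw [toMPAlgebra, bfGen, RingQuot.liftAlgHom_mkAlgHom_apply, FreeAlgebra.lift_ι_apply,
    Sum.elim_inl]

theorem toMPAlgebra_inr (i : Fin g) :
    toMPAlgebra k g (bfGen k g (.inr i)) =
      mpGen k g (.inr (.inr i)) * mpGen k g (.inr (.inl (i, true))) := by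
  rw [toMPAlgebra, bfGen, RingQuot.liftAlgHom_mkAlgHom_apply, FreeAlgebra.lift_ι_apply,
    Sum.elim_inr]

theorem shapeAlgHom_comp_toMPAlgebra :
    (MPAlgebra.shapeAlgHom k g).comp (toMPAlgebra k g) = shapeAlgHom k g := by
  refine RingQuot.ringQuot_ext' _ _ _ (FreeAlgebra.hom_ext (funext fun a => ?_))
  change MPAlgebra.shapeAlgHom k g (toMPAlgebra k g (bfGen k g a)) = shapeAlgHom k g (bfGen k g a)
  rcases a with i | i
  · rw [toMPAlgebra_inl, map_mul, MPAlgebra.shapeAlgHom_mpGen, MPAlgebra.shapeAlgHom_mpGen,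
      ← map_mul, MPVar.shape_mul_shape_inl, shapeAlgHom_bfGen]
  · rw [toMPAlgebra_inr, map_mul, MPAlgebra.shapeAlgHom_mpGen, MPAlgebra.shapeAlgHom_mpGen,
      ← map_mul, MPVar.shape_mul_shape_inr, shapeAlgHom_bfGen]

theorem toMPAlgebra_injective : Function.Injective (toMPAlgebra k g) := by
  refine Function.Injective.of_comp (f := MPAlgebra.shapeAlgHom k g) ?_
  rw [← AlgHom.coe_comp, shapeAlgHom_comp_toMPAlgebra]
  exact shapeAlgHom_injective

end BiFreeAlgebra

theorem bifree_embeds_into_multipartite_general {k : Type*} [Field k] (g : ℕ) :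
    ∃ ϑ : BiFreeAlgebra k g →ₐ[k] MPAlgebra k g,
      (∀ i : Fin g, ϑ (bfGen k g (Sum.inl i)) =
        mpGen k g (Sum.inl i) * mpGen k g (Sum.inr (Sum.inl (i, false)))) ∧
      (∀ i : Fin g, ϑ (bfGen k g (Sum.inr i)) =
        mpGen k g (Sum.inr (Sum.inr i)) * mpGen k g (Sum.inr (Sum.inl (i, true)))) ∧
      Function.Injective ϑ :=
  ⟨BiFreeAlgebra.toMPAlgebra k g, BiFreeAlgebra.toMPAlgebra_inl,
    BiFreeAlgebra.toMPAlgebra_inr, BiFreeAlgebra.toMPAlgebra_injective⟩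

/-- Appendix A. The assignment `X_i ↦ X'_i X''_i`, `Y_i ↦ Y'_i Y''_i`
induces a well-defined `k`-algebra homomorphism `ϑ` from the bi-free algebra `B` to the
multipartite free algebra `A` with `g + 2` parts, and `ϑ` is injective. -/
theorem bifree_embeds_into_multipartite {k : Type*} [Field k] [CharZero k] (g : ℕ) :
    ∃ ϑ : BiFreeAlgebra k g →ₐ[k] MPAlgebra k g,
      (∀ i : Fin g, ϑ (bfGen k g (Sum.inl i)) =
        mpGen k g (Sum.inl i) * mpGen k g (Sum.inr (Sum.inl (i, false)))) ∧
      (∀ i : Fin g, ϑ (bfGen k g (Sum.inr i)) =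
        mpGen k g (Sum.inr (Sum.inr i)) * mpGen k g (Sum.inr (Sum.inl (i, true)))) ∧
      Function.Injective ϑ :=
  bifree_embeds_into_multipartite_general g
end
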